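/- arXiv:2303.02808 — 10 statements merged into one kernel-verified Lean document; each statement's English description precedes it below -/
import Mathlib

section
/- Let n be a positive integer and let p be a 132-avoiding permutation of length n. Then for every position i with 1 ≤ i ≤ n, among all increasing subsequences of p whose first entry is p_i, there is exactly one of maximal length. -/
/-- `s` is (the position set of) an increasing subsequence of the permutation `p`. -/
def IncSubseq {n : ℕ} (p : Equiv.Perm (Fin n)) (s : Finset (Fin n)) : Prop :=
  ∀ a ∈ s, ∀ b ∈ s, a < b → p a < p b

/-- `p` avoids the pattern 132. -/
def Avoids132 {n : ℕ} (p : Equiv.Perm (Fin n)) : Prop :=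
  ¬ ∃ i j k : Fin n, i < j ∧ j < k ∧ p i < p k ∧ p k < p j

/-- The subsequence with position set `s` begins at position `i`. -/
def BeginsAt {n : ℕ} (s : Finset (Fin n)) (i : Fin n) : Prop :=
  i ∈ s ∧ ∀ a ∈ s, i ≤ a

/-- The rank of the entry at position `i`: the maximal length of an increasing
subsequence of `p` beginning at position `i`. -/
noncomputable def rank {n : ℕ} (p : Equiv.Perm (Fin n)) (i : Fin n) : ℕ :=
  sSup {k : ℕ | ∃ s : Finset (Fin n), IncSubseq p s ∧ BeginsAt s i ∧ s.card = k}

/-- Membership in `S n`: positive entries, consecutive decreases by at most 1,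
and the last entry equals 1. -/
def InSn (n : ℕ) (t : Fin n → ℕ) : Prop :=
  (∀ i, 1 ≤ t i) ∧
  (∀ i : ℕ, (h : i + 1 < n) → t ⟨i, Nat.lt_of_succ_lt h⟩ ≤ t ⟨i + 1, h⟩ + 1) ∧
  (∀ h : 0 < n, t ⟨n - 1, Nat.sub_lt h Nat.one_pos⟩ = 1)

/-- `p` has a unique longest increasing subsequence. -/
def HasULIS {n : ℕ} (p : Equiv.Perm (Fin n)) : Prop :=
  ∃! s : Finset (Fin n), IncSubseq p s ∧
    ∀ t : Finset (Fin n), IncSubseq p t → t.card ≤ s.card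

/-- For a 132-avoiding permutation `p` of positive length `n` and any
position `i`, among all increasing subsequences of `p` beginning at `i` there is
exactly one of maximal length. -/
theorem unique_longest_beginning_at (n : ℕ) (hn : 0 < n) (p : Equiv.Perm (Fin n))
    (hp : Avoids132 p) (i : Fin n) :
    ∃! s : Finset (Fin n), IncSubseq p s ∧ BeginsAt s i ∧
      ∀ t : Finset (Fin n), IncSubseq p t → BeginsAt t i → t.card ≤ s.card := by
  classical
  suffices H : ∀ k : ℕ, ∀ i : Fin n, n - i.val ≤ k →
      ∃! s : Finset (Fin n), IncSubseq p s ∧ BeginsAt s i ∧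
        ∀ t : Finset (Fin n), IncSubseq p t → BeginsAt t i → t.card ≤ s.card by
    exact H n i (Nat.sub_le _ _)
  intro k
  induction k with
  | zero =>
    intro i hi
    have hlt := i.isLt
    omega
  | succ k ih =>
    intro i hik
    by_cases hex : ∃ j : Fin n, i < j ∧ p i < p j
    · obtain ⟨j₀, hj₀⟩ := hex
      set F : Finset (Fin n) := Finset.univ.filter (fun j => i < j ∧ p i < p j) with hF
      have hFne : F.Nonempty := ⟨j₀, by simp [hF, hj₀.1, hj₀.2]⟩
      set m : Fin n := F.min' hFne with hmdef
      have hmF : m ∈ F := F.min'_mem hFne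
      have him : i < m := by
        have := hmF; rw [hF, Finset.mem_filter] at this; exact this.2.1
      have hpim : p i < p m := by
        have := hmF; rw [hF, Finset.mem_filter] at this; exact this.2.2
      have hmin : ∀ j : Fin n, i < j → p i < p j → m ≤ j := by
        intro j h1 h2
        exact F.min'_le j (by simp [hF, h1, h2])
      have hkey : ∀ j : Fin n, m < j → p i < p j → p m < p j := by
        intro j hmj hpj
        by_contra hcon
        push_neg at hcon
        have hne : p j ≠ p m := fun e => absurd (p.injective e) (ne_of_gt hmj)
        have hjm : p j < p m := lt_of_le_of_ne hcon hne
        exact hp ⟨i, m, j, him, hmj, hpj, hjm⟩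
      have hkey' : ∀ j : Fin n, i < j → p i < p j → p m ≤ p j := by
        intro j h1 h2
        rcases eq_or_lt_of_le (hmin j h1 h2) with h | h
        · rw [h]
        · exact le_of_lt (hkey j h h2)
      have hmk : n - m.val ≤ k := by
        have h1 : i.val < m.val := him
        have h2 := m.isLt
        omega
      obtain ⟨s₀, ⟨hs₀inc, hs₀beg, hs₀max⟩, hs₀uniq⟩ := ih m hmk
      have hins₀ : i ∉ s₀ := fun h => absurd (hs₀beg.2 i h) (not_le.mpr him)
      have hs₀pos : 1 ≤ s₀.card := Finset.card_pos.mpr ⟨m, hs₀beg.1⟩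
      have hval : ∀ b ∈ s₀, p i < p b := by
        intro b hb
        rcases eq_or_lt_of_le (hs₀beg.2 b hb) with h | h
        · rw [← h]; exact hpim
        · exact lt_trans hpim (hs₀inc m hs₀beg.1 b hb h)
      have hins_inc : IncSubseq p (insert i s₀) := by
        intro a ha b hb hab
        rcases Finset.mem_insert.mp ha with ha' | ha' <;>
          rcases Finset.mem_insert.mp hb with hb' | hb'
        · subst ha'; subst hb'; exact absurd hab (lt_irrefl _)
        · subst ha'; exact hval b hb'
        · subst hb'
          exact absurd hab (not_lt.mpr (le_of_lt (lt_of_lt_of_le him (hs₀beg.2 a ha'))))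
        · exact hs₀inc a ha' b hb' hab
      have hins_beg : BeginsAt (insert i s₀) i := by
        refine ⟨Finset.mem_insert_self i s₀, ?_⟩
        intro a ha
        rcases Finset.mem_insert.mp ha with h | h
        · exact le_of_eq h.symm
        · exact le_of_lt (lt_of_lt_of_le him (hs₀beg.2 a h))
      have hins_card : (insert i s₀).card = s₀.card + 1 :=
        Finset.card_insert_of_notMem hins₀
      have hins_max : ∀ t : Finset (Fin n), IncSubseq p t → BeginsAt t i →
          t.card ≤ (insert i s₀).card := by
        intro t htinc htbeg
        have hit : i ∈ t := htbeg.1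
        set t' := t.erase i with ht'
        have htpos : 1 ≤ t.card := Finset.card_pos.mpr ⟨i, hit⟩
        have htcard : t.card = t'.card + 1 := by
          rw [ht', Finset.card_erase_of_mem hit]; omega
        rcases Finset.eq_empty_or_nonempty t' with he | hne
        · rw [htcard, he, hins_card]; simp
        · set j := t'.min' hne with hjdef
          have hjt' : j ∈ t' := t'.min'_mem hne
          have hjt : j ∈ t := Finset.mem_of_mem_erase hjt'
          have hjne : j ≠ i := Finset.ne_of_mem_erase hjt'
          have hij : i < j := lt_of_le_of_ne (htbeg.2 j hjt) (Ne.symm hjne)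
          have hpij : p i < p j := htinc i hit j hjt hij
          have hmj : m ≤ j := hmin j hij hpij
          have hpmj : p m ≤ p j := hkey' j hij hpij
          have hsub : ∀ a ∈ t'.erase j, a ∈ t := fun a ha =>
            Finset.mem_of_mem_erase (Finset.mem_of_mem_erase ha)
          have haway : ∀ a ∈ t'.erase j, j < a := by
            intro a ha
            exact lt_of_le_of_ne (t'.min'_le a (Finset.mem_of_mem_erase ha))
              (Ne.symm (Finset.ne_of_mem_erase ha))
          have hmne : m ∉ t'.erase j := fun h => absurd (haway m h) (not_lt.mpr hmj)
          have hucard : (insert m (t'.erase j)).card = t'.card := by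
            rw [Finset.card_insert_of_notMem hmne, Finset.card_erase_of_mem hjt']
            have : 1 ≤ t'.card := Finset.card_pos.mpr hne
            omega
          have hvalt : ∀ a ∈ t'.erase j, p m < p a := by
            intro a ha
            exact lt_of_le_of_lt hpmj (htinc j hjt a (hsub a ha) (haway a ha))
          have huinc : IncSubseq p (insert m (t'.erase j)) := by
            intro a ha b hb hab
            rcases Finset.mem_insert.mp ha with ha' | ha' <;>
              rcases Finset.mem_insert.mp hb with hb' | hb'
            · subst ha'; subst hb'; exact absurd hab (lt_irrefl _)
            · subst ha'; exact hvalt b hb'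
            · subst hb'
              exact absurd hab (not_lt.mpr (le_of_lt (lt_of_le_of_lt hmj (haway a ha'))))
            · exact htinc a (hsub a ha') b (hsub b hb') hab
          have hubeg : BeginsAt (insert m (t'.erase j)) m := by
            refine ⟨Finset.mem_insert_self _ _, ?_⟩
            intro a ha
            rcases Finset.mem_insert.mp ha with h | h
            · exact le_of_eq h.symm
            · exact le_of_lt (lt_of_le_of_lt hmj (haway a h))
          have hle := hs₀max _ huinc hubeg
          rw [hucard] at hle
          rw [htcard, hins_card]
          omega
      refine ⟨insert i s₀, ⟨hins_inc, hins_beg, hins_max⟩, ?_⟩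
      rintro s ⟨hsinc, hsbeg, hsmax⟩
      have hcard1 : s.card ≤ (insert i s₀).card := hins_max s hsinc hsbeg
      have hcard2 : (insert i s₀).card ≤ s.card := hsmax _ hins_inc hins_beg
      have hcards : s.card = s₀.card + 1 := by omega
      have his : i ∈ s := hsbeg.1
      set s' := s.erase i with hs'
      have hs'card : s'.card = s₀.card := by
        rw [hs', Finset.card_erase_of_mem his]; omega
      have hs'ne : s'.Nonempty := Finset.card_pos.mp (by omega)
      set j := s'.min' hs'ne with hjdef
      have hjt' : j ∈ s' := s'.min'_mem hs'ne
      have hjs : j ∈ s := Finset.mem_of_mem_erase hjt'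
      have hij : i < j := lt_of_le_of_ne (hsbeg.2 j hjs)
        (Ne.symm (Finset.ne_of_mem_erase hjt'))
      have hpij : p i < p j := hsinc i his j hjs hij
      have hmj : m ≤ j := hmin j hij hpij
      have hjm : j = m := by
        by_contra hne
        have hmj' : m < j := lt_of_le_of_ne hmj (Ne.symm hne)
        have hpmj : p m < p j := hkey j hmj' hpij
        have hms : m ∉ s := by
          intro h
          have h1 : m ∈ s' := Finset.mem_erase.mpr ⟨ne_of_gt him, h⟩
          exact absurd (s'.min'_le m h1) (not_le.mpr hmj')
        have haway : ∀ a ∈ s', j ≤ a := fun a ha => s'.min'_le a ha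
        have hvals : ∀ a ∈ s', p m < p a := by
          intro a ha
          rcases eq_or_lt_of_le (haway a ha) with h | h
          · rw [← h]; exact hpmj
          · exact lt_trans hpmj (hsinc j hjs a (Finset.mem_of_mem_erase ha) h)
        have htinc : IncSubseq p (insert m s) := by
          intro a ha b hb hab
          rcases Finset.mem_insert.mp ha with ha' | ha' <;>
            rcases Finset.mem_insert.mp hb with hb' | hb'
          · subst ha'; subst hb'; exact absurd hab (lt_irrefl _)
          · subst ha'
            have hbne : b ≠ i := by
              intro e
              subst e
              exact absurd hab (not_lt.mpr (le_of_lt him))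
            exact hvals b (Finset.mem_erase.mpr ⟨hbne, hb'⟩)
          · subst hb'
            rcases eq_or_ne a i with h | h
            · rw [h]; exact hpim
            · exact absurd hab (not_lt.mpr (le_of_lt (lt_of_lt_of_le hmj'
                (haway a (Finset.mem_erase.mpr ⟨h, ha'⟩)))))
          · exact hsinc a ha' b hb' hab
        have htbeg : BeginsAt (insert m s) i := by
          refine ⟨Finset.mem_insert_of_mem his, ?_⟩
          intro a ha
          rcases Finset.mem_insert.mp ha with h | h
          · rw [h]; exact le_of_lt him
          · exact hsbeg.2 a h
        have hcon := hsmax _ htinc htbeg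
        rw [Finset.card_insert_of_notMem hms] at hcon
        omega
      have hs'inc : IncSubseq p s' := fun a ha b hb hab =>
        hsinc a (Finset.mem_of_mem_erase ha) b (Finset.mem_of_mem_erase hb) hab
      have hs'beg : BeginsAt s' m := ⟨hjm ▸ hjt', fun a ha => hjm ▸ s'.min'_le a ha⟩
      have hs'max : ∀ t : Finset (Fin n), IncSubseq p t → BeginsAt t m →
          t.card ≤ s'.card := by
        intro t h1 h2
        rw [hs'card]
        exact hs₀max t h1 h2
      have heq : s' = s₀ := hs₀uniq s' ⟨hs'inc, hs'beg, hs'max⟩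
      rw [← heq]
      exact (Finset.insert_erase his).symm
    · push_neg at hex
      have huniq : ∀ s : Finset (Fin n), IncSubseq p s → BeginsAt s i → s = {i} := by
        intro s hs hb
        apply Finset.eq_singleton_iff_unique_mem.mpr
        refine ⟨hb.1, ?_⟩
        intro a ha
        by_contra hne
        have hia : i < a := lt_of_le_of_ne (hb.2 a ha) (Ne.symm hne)
        exact absurd (hs i hb.1 a ha hia) (not_lt.mpr (hex a hia))
      refine ⟨{i}, ⟨?_, ?_, ?_⟩, ?_⟩
      · intro a ha b hb hab
        rw [Finset.mem_singleton] at ha hb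
        subst ha; subst hb
        exact absurd hab (lt_irrefl _)
      · exact ⟨Finset.mem_singleton_self i, by
          intro a ha
          rw [Finset.mem_singleton] at ha
          exact le_of_eq ha.symm⟩
      · intro t ht hbt
        rw [huniq t ht hbt]
      · rintro s ⟨hs, hb, _⟩
        exact huniq s hs hb
end

section
/- Let p be a 132-avoiding permutation of length n and, for each position i, let r(p_i) denote the rank of p_i, i.e., the maximal length of an increasing subsequence of p beginning at position i. Then for every i with 1 ≤ i ≤ n−1, one has r(p_i) − r(p_{i+1}) ≤ 1 (equivalently, r(p_i) ≤ r(p_{i+1}) + 1). -/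
/-- For a 132-avoiding permutation, consecutive ranks decrease by at
most one: `r(p_i) ≤ r(p_{i+1}) + 1`. -/
theorem rank_le_succ_rank_add_one (n : ℕ) (p : Equiv.Perm (Fin n)) (hp : Avoids132 p)
    (i : ℕ) (hi : i + 1 < n) :
    rank p ⟨i, Nat.lt_of_succ_lt hi⟩ ≤ rank p ⟨i + 1, hi⟩ + 1 := by
  set I : Fin n := ⟨i, Nat.lt_of_succ_lt hi⟩
  set J : Fin n := ⟨i + 1, hi⟩
  have hIJ : I < J := by simp [I, J, Fin.lt_def]
  have hbdd : BddAbove {k : ℕ | ∃ s : Finset (Fin n),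
      IncSubseq p s ∧ BeginsAt s J ∧ s.card = k} := by
    refine ⟨n, fun k hk => ?_⟩
    obtain ⟨s, -, -, rfl⟩ := hk
    simpa using s.card_le_univ
  have hne : {k : ℕ | ∃ s : Finset (Fin n),
      IncSubseq p s ∧ BeginsAt s I ∧ s.card = k}.Nonempty := by
    refine ⟨1, {I}, ?_, ⟨Finset.mem_singleton_self I, ?_⟩, Finset.card_singleton I⟩
    · intro a ha b hb hab
      rw [Finset.mem_singleton] at ha hb
      subst ha; subst hb
      exact absurd hab (lt_irrefl _)
    · intro a ha
      rw [Finset.mem_singleton] at ha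
      simp [ha]
  apply csSup_le hne
  intro k hk
  obtain ⟨s, hinc, hbeg, rfl⟩ := hk
  set t : Finset (Fin n) := insert J (s.erase I) with ht
  have hIs : I ∈ s := hbeg.1
  have hmem : ∀ a ∈ s.erase I, J ≤ a := by
    intro a ha
    rw [Finset.mem_erase] at ha
    have h1 : I ≤ a := hbeg.2 a ha.2
    have h2 : I < a := lt_of_le_of_ne h1 (Ne.symm ha.1)
    exact Fin.mk_le_mk.mpr (Nat.succ_le_of_lt h2)
  have htinc : IncSubseq p t := by
    intro a ha b hb hab
    rw [ht, Finset.mem_insert] at ha hb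
    rcases ha with rfl | ha
    · rcases hb with rfl | hb
      · exact absurd hab (lt_irrefl _)
      · -- a = J, b ∈ s.erase I
        rw [Finset.mem_erase] at hb
        have hbJ : b ≠ J := (ne_of_gt hab)
        have hIb : I < b := lt_of_le_of_ne (hbeg.2 b hb.2) (Ne.symm hb.1)
        by_contra hcon
        have h1 : p b ≤ p J := not_lt.mp hcon
        have h2 : p b ≠ p J := fun e => hbJ (p.injective e)
        exact hp ⟨I, J, b, hIJ, hab, hinc I hIs b hb.2 hIb, lt_of_le_of_ne h1 h2⟩
    · rcases hb with rfl | hb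
      · exact absurd hab (not_lt.mpr (hmem a ha))
      · rw [Finset.mem_erase] at ha hb
        exact hinc a ha.2 b hb.2 hab
  have htbeg : BeginsAt t J := by
    constructor
    · exact Finset.mem_insert_self _ _
    · intro a ha
      rw [ht, Finset.mem_insert] at ha
      rcases ha with rfl | ha
      · exact le_refl _
      · exact hmem a ha
  have hcard : s.card ≤ t.card + 1 := by
    have h1 : s.erase I ⊆ t := Finset.subset_insert _ _
    have h2 : s.card - 1 ≤ t.card := by
      rw [← Finset.card_erase_of_mem hIs]
      exact Finset.card_le_card h1
    omega
  have : t.card ≤ rank p J := le_csSup hbdd ⟨t, htinc, htbeg, rfl⟩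
  omega
end

section
/- Let p be a 132-avoiding permutation of length n and let R(p) = r(p_1) r(p_2) ... r(p_n) be its rank sequence. Then R(p) is a sequence of positive integers satisfying r(p_i) − r(p_{i+1}) ≤ 1 for all 1 ≤ i ≤ n−1 and r(p_n) = 1; that is, R(p) lies in S_n. -/
/-!
Ranks are at least 1 (singletons) and the last rank is 1 (nothing follows it). For the
descent bound, take a longest increasing subsequence `s` starting at position `i` and replace
its first entry by position `i + 1`. Any later entry `p_b` of `s` exceeds `p_i`, so `p_b` cannot
lie below `p_{i+1}` without forming a 132 pattern; hence the new set is still increasing, and it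
has lost at most one element.
-/

section

variable {n : ℕ} {p : Equiv.Perm (Fin n)}

theorem Avoids132.lt_of_lt_of_lt (hp : Avoids132 p) {i j k : Fin n} (hij : i < j) (hjk : j < k)
    (hik : p i < p k) : p j < p k := by
  refine lt_of_le_of_ne (not_lt.mp fun hkj => hp ⟨i, j, k, hij, hjk, hik, hkj⟩) ?_
  exact fun h => hjk.ne (p.injective h)

theorem IncSubseq.mono {s t : Finset (Fin n)} (hs : IncSubseq p s) (hts : t ⊆ s) :
    IncSubseq p t :=
  fun a ha b hb hab => hs a (hts ha) b (hts hb) hab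

theorem incSubseq_singleton (i : Fin n) : IncSubseq p {i} := by
  intro a ha b hb hab
  rw [Finset.mem_singleton] at ha hb
  exact absurd (ha.trans hb.symm) hab.ne

theorem beginsAt_singleton (i : Fin n) : BeginsAt {i} i :=
  ⟨Finset.mem_singleton_self i, fun _ ha => (Finset.mem_singleton.mp ha).ge⟩

theorem IncSubseq.insert_of_le {s : Finset (Fin n)} {k : Fin n} (hs : IncSubseq p s)
    (hle : ∀ a ∈ s, k ≤ a) (hlt : ∀ a ∈ s, k < a → p k < p a) : IncSubseq p (insert k s) := by
  intro a ha b hb hab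
  rcases Finset.mem_insert.mp ha with rfl | ha
  · rcases Finset.mem_insert.mp hb with hb | hb
    · exact absurd hab (hb ▸ lt_irrefl a)
    · exact hlt b hb hab
  · rcases Finset.mem_insert.mp hb with hb | hb
    · exact absurd (hle a ha) (not_le.mpr (hb ▸ hab))
    · exact hs a ha b hb hab

theorem beginsAt_insert {s : Finset (Fin n)} {k : Fin n} (hle : ∀ a ∈ s, k ≤ a) :
    BeginsAt (insert k s) k :=
  ⟨Finset.mem_insert_self k s, fun a ha => (Finset.mem_insert.mp ha).elim ge_of_eq (hle a)⟩

theorem bddAbove_rank_set (p : Equiv.Perm (Fin n)) (i : Fin n) :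
    BddAbove {k : ℕ | ∃ s : Finset (Fin n), IncSubseq p s ∧ BeginsAt s i ∧ s.card = k} := by
  refine ⟨n, ?_⟩
  rintro _ ⟨s, -, -, rfl⟩
  simpa using Finset.card_le_univ s

theorem card_le_rank {s : Finset (Fin n)} {i : Fin n} (hs : IncSubseq p s) (hi : BeginsAt s i) :
    s.card ≤ rank p i :=
  le_csSup (bddAbove_rank_set p i) ⟨s, hs, hi, rfl⟩

theorem exists_card_eq_rank (p : Equiv.Perm (Fin n)) (i : Fin n) :
    ∃ s : Finset (Fin n), IncSubseq p s ∧ BeginsAt s i ∧ s.card = rank p i := by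
  refine Nat.sSup_mem ?_ (bddAbove_rank_set p i)
  exact ⟨1, {i}, incSubseq_singleton i, beginsAt_singleton i, Finset.card_singleton i⟩

theorem one_le_rank (p : Equiv.Perm (Fin n)) (i : Fin n) : 1 ≤ rank p i :=
  card_le_rank (incSubseq_singleton i) (beginsAt_singleton i)

theorem rank_eq_one_of_isTop (p : Equiv.Perm (Fin n)) {i : Fin n} (hi : IsTop i) :
    rank p i = 1 := by
  refine le_antisymm ?_ (one_le_rank p i)
  obtain ⟨s, -, ⟨-, hfirst⟩, hcard⟩ := exists_card_eq_rank p i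
  rw [← hcard, Finset.card_le_one]
  intro a ha b hb
  rw [le_antisymm (hi a) (hfirst a ha), le_antisymm (hi b) (hfirst b hb)]

theorem Avoids132.rank_le_rank_add_one (hp : Avoids132 p) {i k : Fin n}
    (hk : k.val = i.val + 1) : rank p i ≤ rank p k + 1 := by
  obtain ⟨s, hs, ⟨his, hfirst⟩, hcard⟩ := exists_card_eq_rank p i
  have hle : ∀ a ∈ s.erase i, k ≤ a := fun a ha => by
    have hia : i < a :=
      lt_of_le_of_ne (hfirst a (Finset.mem_of_mem_erase ha)) (Finset.ne_of_mem_erase ha).symm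
    rw [Fin.lt_def] at hia
    rw [Fin.le_def]; omega
  have hlt : ∀ a ∈ s.erase i, k < a → p k < p a := fun a ha hka => by
    have hik : i < k := by rw [Fin.lt_def]; omega
    exact hp.lt_of_lt_of_lt hik hka (hs i his a (Finset.mem_of_mem_erase ha) (hik.trans hka))
  have hinc := (hs.mono (Finset.erase_subset i s)).insert_of_le hle hlt
  calc rank p i = (s.erase i).card + 1 := by rw [Finset.card_erase_add_one his, hcard]
    _ ≤ (insert k (s.erase i)).card + 1 := by gcongr; exact Finset.subset_insert k _
    _ ≤ rank p k + 1 := by gcongr; exact card_le_rank hinc (beginsAt_insert hle)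

end

/-- The rank sequence of a 132-avoiding permutation of positive length
consists of positive integers, satisfies `r(p_i) - r(p_{i+1}) ≤ 1`, and ends in `1`;
that is, it lies in `S_n`. -/
theorem rank_seq_mem_Sn (n : ℕ) (hn : 0 < n) (p : Equiv.Perm (Fin n))
    (hp : Avoids132 p) :
    (∀ i : Fin n, 1 ≤ rank p i) ∧
    (∀ i : ℕ, (h : i + 1 < n) →
      rank p ⟨i, Nat.lt_of_succ_lt h⟩ ≤ rank p ⟨i + 1, h⟩ + 1) ∧
    rank p ⟨n - 1, Nat.sub_lt hn Nat.one_pos⟩ = 1 := by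
  refine ⟨one_le_rank p, fun i h => hp.rank_le_rank_add_one rfl, ?_⟩
  exact rank_eq_one_of_isTop p fun a => Fin.le_def.mpr (Nat.le_sub_one_of_lt a.isLt)
end

section
/- For every positive integer n, the map R sending each 132-avoiding permutation p of length n to its rank sequence R(p) = r(p_1) r(p_2) ... r(p_n) is injective: if p and q are 132-avoiding permutations of length n with R(p) = R(q), then p = q. -/
/-!
In a 132-avoiding permutation the entries to the right of `p i` that exceed it form an increasing
sequence, so `rank p i - 1` is their number. This count determines any permutation: at the first
position `i` where `p` and `q` differ, say `p i < q i`, both have the same set of values left to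
place at positions `≥ i`, and `q i` is one of them above `p i`, so `p i` has strictly more larger
entries to its right than `q i`.
-/

open Finset

section Code

variable {α β : Type*} [LinearOrder α]

lemma Equiv.le_symm_iff_of_eqOn_Iio {p q : α ≃ β} {i : α} (hpq : ∀ j < i, p j = q j) (v : β) :
    i ≤ p.symm v ↔ i ≤ q.symm v := by
  simp only [← not_lt]
  refine not_congr ⟨fun hv => ?_, fun hv => ?_⟩
  · rwa [q.symm_apply_eq.2 ((hpq _ hv).symm.trans (p.apply_symm_apply v)).symm]
  · rwa [p.symm_apply_eq.2 ((hpq _ hv).trans (q.apply_symm_apply v)).symm]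

variable [Fintype α] [Fintype β] [LinearOrder β]

lemma Equiv.card_filter_lt_and_lt_eq (p : α ≃ β) (i : α) :
    #{j | i < j ∧ p i < p j} = #{v | i ≤ p.symm v ∧ p i < v} :=
  card_equiv p fun j => by
    simp only [mem_filter, mem_univ, true_and, Equiv.symm_apply_apply]
    exact ⟨fun ⟨hij, hlt⟩ => ⟨hij.le, hlt⟩, fun ⟨hij, hlt⟩ =>
      ⟨hij.lt_of_ne (by rintro rfl; exact lt_irrefl _ hlt), hlt⟩⟩

theorem Equiv.eq_of_card_filter_lt_and_lt_eq {p q : α ≃ β}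
    (h : ∀ i, #{j | i < j ∧ p i < p j} = #{j | i < j ∧ q i < q j}) : p = q := by
  by_contra hne
  obtain ⟨i, hi, hmin⟩ := wellFounded_lt.has_min {i | p i ≠ q i}
    (by simpa [Set.Nonempty, Equiv.ext_iff] using hne)
  have hpq : ∀ j < i, p j = q j := fun j hj => not_not.1 fun hj' => hmin j hj' hj
  wlog hlt : p i < q i generalizing p q
  · exact this (fun i => (h i).symm) (Ne.symm hne) (Ne.symm hi)
      (fun j hj' hj => hmin j (Ne.symm hj') hj) (fun j hj => (hpq j hj).symm)
      (lt_of_le_of_ne (not_lt.1 hlt) (Ne.symm hi))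
  have hsub : ({v | i ≤ q.symm v ∧ q i < v} : Finset β) ⊂
      ({v | i ≤ p.symm v ∧ p i < v} : Finset β) := by
    refine (ssubset_iff_of_subset fun v hv => ?_).2 ⟨q i, ?_, ?_⟩
    · simp only [mem_filter, mem_univ, true_and] at hv ⊢
      exact ⟨(Equiv.le_symm_iff_of_eqOn_Iio hpq v).2 hv.1, hlt.trans hv.2⟩
    · simpa [Equiv.le_symm_iff_of_eqOn_Iio hpq] using hlt
    · simp
  have := h i
  rw [Equiv.card_filter_lt_and_lt_eq, Equiv.card_filter_lt_and_lt_eq] at this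
  exact (card_lt_card hsub).ne' this

end Code

section Rank

variable {n : ℕ} {p : Equiv.Perm (Fin n)} {s : Finset (Fin n)} {i : Fin n}

lemma IncSubseq.subset_insert_filter (hs : IncSubseq p s) (hi : BeginsAt s i) :
    s ⊆ insert i ({j | i < j ∧ p i < p j} : Finset (Fin n)) := fun a ha => by
  rcases (hi.2 a ha).eq_or_lt with rfl | hia
  · exact mem_insert_self i _
  · exact mem_insert_of_mem (by simpa using ⟨hia, hs i hi.1 a ha hia⟩)

lemma Avoids132.incSubseq_insert_filter (hp : Avoids132 p) (i : Fin n) :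
    IncSubseq p (insert i ({j | i < j ∧ p i < p j} : Finset (Fin n))) := by
  intro a ha b hb hab
  simp only [mem_insert, mem_filter, mem_univ, true_and] at ha hb
  rcases ha with rfl | ⟨hia, -⟩ <;> rcases hb with rfl | ⟨-, hpb⟩
  · exact absurd hab (lt_irrefl _)
  · exact hpb
  · exact absurd (hia.trans hab) (lt_irrefl _)
  · exact lt_of_not_ge fun hba =>
      hp ⟨i, a, b, hia, hab, hpb, hba.lt_of_ne (p.injective.ne hab.ne')⟩

lemma Avoids132.rank_eq (hp : Avoids132 p) (i : Fin n) :
    rank p i = #{j | i < j ∧ p i < p j} + 1 := by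
  have hgreatest : IsGreatest
      {k | ∃ s : Finset (Fin n), IncSubseq p s ∧ BeginsAt s i ∧ s.card = k}
      (insert i ({j | i < j ∧ p i < p j} : Finset (Fin n))).card := by
    refine ⟨⟨_, hp.incSubseq_insert_filter i, ⟨mem_insert_self _ _, fun a ha => ?_⟩, rfl⟩, ?_⟩
    · simp only [mem_insert, mem_filter, mem_univ, true_and] at ha
      rcases ha with rfl | ⟨hia, -⟩
      exacts [le_rfl, hia.le]
    · rintro k ⟨s, hs, hi, rfl⟩
      exact card_le_card (hs.subset_insert_filter hi)
  rw [rank, hgreatest.csSup_eq, card_insert_of_notMem (by simp)]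

end Rank

theorem rank_seq_injective_general (n : ℕ) (p q : Equiv.Perm (Fin n))
    (hp : Avoids132 p) (hq : Avoids132 q)
    (h : (fun i : Fin n => rank p i) = fun i : Fin n => rank q i) :
    p = q :=
  Equiv.eq_of_card_filter_lt_and_lt_eq fun i => by
    simpa [hp.rank_eq, hq.rank_eq] using congrFun h i

/-- The rank-sequence map is injective on 132-avoiding permutations:
if two 132-avoiding permutations of length `n` have the same rank sequence, they
are equal. -/
theorem rank_seq_injective (n : ℕ) (hn : 0 < n) (p q : Equiv.Perm (Fin n))
    (hp : Avoids132 p) (hq : Avoids132 q)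
    (h : (fun i : Fin n => rank p i) = fun i : Fin n => rank q i) :
    p = q :=
  rank_seq_injective_general n p q hp hq h
end

section
/- For every positive integer n, the number of sequences t_1 t_2 ... t_n of positive integers satisfying t_i − t_{i+1} ≤ 1 for all 1 ≤ i ≤ n−1 and t_n = 1 equals the n-th Catalan number C_n = binomial(2n, n)/(n+1). -/
open List DyckStep

/-- Encode a list of nonneg integers as a step list: `a :: l ↦ U^a D ++ toWord l`. -/
def toWord : List ℕ → List DyckStep
  | [] => []
  | a :: l => List.replicate a U ++ D :: toWord l

def fromWord : List DyckStep → List ℕ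
  | [] => []
  | U :: w => match fromWord w with
      | [] => []
      | a :: l => (a + 1) :: l
  | D :: w => 0 :: fromWord w

lemma fromWord_replicate (a : ℕ) (w : List DyckStep) :
    fromWord (List.replicate a U ++ D :: w) = a :: fromWord w := by
  induction a with
  | zero => simp [fromWord]
  | succ a ih => simp [List.replicate_succ, fromWord, ih]

lemma from_to (l : List ℕ) : fromWord (toWord l) = l := by
  induction l with
  | nil => rfl
  | cons a l ih => simp [toWord, fromWord_replicate, ih]

lemma fromWord_eq_nil {w : List DyckStep} (h : fromWord w = []) : ∀ x ∈ w, x = U := by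
  induction w with
  | nil => simp
  | cons s w ih =>
    cases s with
    | U =>
      intro x hx
      rcases List.mem_cons.1 hx with rfl | hx
      · rfl
      · apply ih _ x hx
        simp only [fromWord] at h
        cases hw : fromWord w with
        | nil => rfl
        | cons a l => rw [hw] at h; simp at h
    | D => simp [fromWord] at h

lemma to_from (w : List DyckStep) (h : w.getLast? ≠ some U) : toWord (fromWord w) = w := by
  induction w with
  | nil => rfl
  | cons s w ih =>
    have hw' : w = [] ∨ w.getLast? ≠ some U := by
      cases w with
      | nil => exact Or.inl rfl
      | cons b w2 => exact Or.inr (by rwa [List.getLast?_cons_cons] at h)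
    cases s with
    | D =>
      rcases hw' with rfl | hw'
      · rfl
      · simp [fromWord, toWord, ih hw']
    | U =>
      rcases hw' with rfl | hw'
      · simp at h
      · cases hw : fromWord w with
        | nil =>
          exfalso
          have hne : w ≠ [] := by
            rintro rfl; simp at h
          have : w.getLast (by exact hne) = U :=
            fromWord_eq_nil hw _ (List.getLast_mem hne)
          rw [List.getLast?_eq_getLast_of_ne_nil hne] at hw'
          exact hw' (by rw [this])
        | cons a l =>
          have : fromWord (U :: w) = (a + 1) :: l := by simp [fromWord, hw]
          rw [this]
          have : toWord ((a + 1) :: l) = U :: toWord (a :: l) := by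
            simp [toWord, List.replicate_succ]
          rw [this, ← hw, ih hw']

lemma count_D_toWord (l : List ℕ) : (toWord l).count D = l.length := by
  induction l with
  | nil => rfl
  | cons a l ih => simp [toWord, List.count_append, ih, List.count_replicate]

lemma count_U_toWord (l : List ℕ) : (toWord l).count U = l.sum := by
  induction l with
  | nil => rfl
  | cons a l ih => simp [toWord, List.count_append, ih, List.count_replicate]

/-- Prefix condition with slack. -/
lemma toWord_prefix (l : List ℕ) (c : ℕ)
    (H : ∀ j < l.length, j + 1 ≤ c + (l.take (j + 1)).sum) (i : ℕ) :
    ((toWord l).take i).count D ≤ c + ((toWord l).take i).count U := by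
  induction l generalizing c i with
  | nil => simp [toWord]
  | cons a l ih =>
    have h0 : 1 ≤ c + a := by simpa using H 0 (by simp)
    rw [toWord, List.take_append]
    rcases le_or_gt i a with hi | hi
    · have : i - (List.replicate a U).length = 0 := by simp; omega
      rw [this, List.take_zero, List.append_nil, List.take_replicate]
      simp [List.count_replicate]
    · have hrep : (List.replicate a U).take i = List.replicate a U := by
        apply List.take_of_length_le; simp; omega
      have hlen : i - (List.replicate a U).length = i - a := by simp
      rw [hrep, hlen]
      obtain ⟨k, hk⟩ : ∃ k, i - a = k + 1 := ⟨i - a - 1, by omega⟩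
      rw [hk]
      simp only [List.take_cons, List.count_append, List.count_cons, List.count_replicate]
      have IH := ih (c + a - 1) (fun j hj => by
        have := H (j + 1) (by simpa using hj)
        simp [List.take_cons] at this ⊢
        omega) k
      simp
      omega

lemma counts_take_at (l : List ℕ) (j : ℕ) (hj : j < l.length) :
    ((toWord l).take ((l.take (j + 1)).sum + (j + 1))).count D = j + 1 ∧
    ((toWord l).take ((l.take (j + 1)).sum + (j + 1))).count U = (l.take (j + 1)).sum := by
  induction l generalizing j with
  | nil => simp at hj
  | cons a l ih =>
    cases j with
    | zero =>
      simp only [List.take_succ_cons, List.take_zero, List.sum_cons, List.sum_nil,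
        Nat.add_zero, Nat.zero_add]
      rw [toWord, List.take_append]
      have h1 : (List.replicate a U).take (a + 0 + 1) = List.replicate a U := by
        apply List.take_of_length_le; simp
      have h2 : a + 0 + 1 - (List.replicate a U).length = 1 := by simp
      rw [h1, h2]
      simp [List.count_replicate]
    | succ j =>
      have hj' : j < l.length := by simpa using hj
      have S : ((a :: l).take (j + 2)).sum = a + (l.take (j + 1)).sum := by simp
      rw [S, toWord, List.take_append]
      have h1 : (List.replicate a U).take (a + (l.take (j+1)).sum + (j + 2)) = List.replicate a U := by
        apply List.take_of_length_le; simp; omega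
      have h2 : a + (l.take (j+1)).sum + (j + 2) - (List.replicate a U).length
          = (l.take (j+1)).sum + (j + 1) + 1 := by simp; omega
      rw [h1, h2]
      obtain ⟨cD, cU⟩ := ih j hj'
      simp [List.take_cons, List.count_append, List.count_replicate, cD, cU]

/-- Lists of `n` nonneg integers summing to `n` whose partial sums dominate the count. -/
abbrev Ln (n : ℕ) : Type :=
  {l : List ℕ // l.length = n ∧ l.sum = n ∧ ∀ j < n, j + 1 ≤ (l.take (j + 1)).sum}

def equivB (n : ℕ) : Ln n ≃ {p : DyckWord // p.semilength = n} where
  toFun l := ⟨⟨toWord l.1,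
      by rw [count_U_toWord, count_D_toWord, l.2.1, l.2.2.1],
      fun i => by
        have h := toWord_prefix l.1 0
          (fun j hj => by simpa using l.2.2.2 j (l.2.1 ▸ hj)) i
        simpa using h⟩,
    by simpa [DyckWord.semilength, count_U_toWord] using l.2.2.1⟩
  invFun p := ⟨fromWord p.1.toList, by
    have hlast : p.1.toList.getLast? ≠ some U := by
      rcases eq_or_ne p.1.toList [] with he | he
      · simp [he]
      · rw [List.getLast?_eq_getLast_of_ne_nil he, p.1.getLast_eq_D he]
        simp
    have tf : toWord (fromWord p.1.toList) = p.1.toList := to_from _ hlast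
    have hlen : (fromWord p.1.toList).length = n := by
      have := count_D_toWord (fromWord p.1.toList)
      rw [tf] at this
      rw [← this, ← p.1.count_U_eq_count_D]
      exact p.2
    have hsum : (fromWord p.1.toList).sum = n := by
      have := count_U_toWord (fromWord p.1.toList)
      rw [tf] at this
      rw [← this]; exact p.2
    refine ⟨hlen, hsum, fun j hj => ?_⟩
    obtain ⟨cD, cU⟩ := counts_take_at (fromWord p.1.toList) j (by omega)
    rw [tf] at cD cU
    have := p.1.count_D_le_count_U
      (((fromWord p.1.toList).take (j + 1)).sum + (j + 1))
    rw [cD, cU] at this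
    exact this⟩
  left_inv l := Subtype.ext (from_to l.1)
  right_inv p := by
    apply Subtype.ext; apply DyckWord.ext
    show toWord (fromWord p.1.toList) = p.1.toList
    apply to_from
    rcases eq_or_ne p.1.toList [] with he | he
    · simp [he]
    · rw [List.getLast?_eq_getLast_of_ne_nil he, p.1.getLast_eq_D he]
      simp

def bl (n : ℕ) (t : Fin n → ℕ) : List ℕ :=
  List.ofFn (fun i : Fin n => if _ : i.1 = 0 then t i else t i + 1 - t ⟨i.1 - 1, by omega⟩)

lemma bl_length (t : Fin n → ℕ) : (bl n t).length = n := by simp [bl]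

lemma bl_sum_take (t : Fin n → ℕ) (ht : InSn n t) :
    ∀ j (hj : j < n), ((bl n t).take (j + 1)).sum = t ⟨j, hj⟩ + j := by
  intro j
  induction j with
  | zero =>
    intro hj
    rw [List.sum_take_succ _ 0 (by rw [bl_length]; omega)]
    simp [bl]
  | succ j ih =>
    intro hj
    rw [List.sum_take_succ _ (j + 1) (by rw [bl_length]; omega), ih (by omega)]
    have hle := ht.2.1 j hj
    have hb : (bl n t)[j + 1]'(by rw [bl_length]; omega)
        = t ⟨j + 1, hj⟩ + 1 - t ⟨j, by omega⟩ := by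
      simp [bl]
    rw [hb]
    omega

lemma bl_inSn (n : ℕ) (t : Fin n → ℕ) (ht : InSn n t) :
    (bl n t).length = n ∧ (bl n t).sum = n ∧
      ∀ j < n, j + 1 ≤ ((bl n t).take (j + 1)).sum := by
  have h := bl_sum_take t ht
  refine ⟨bl_length t, ?_, ?_⟩
  · rcases Nat.eq_zero_or_pos n with rfl | hn
    · have : bl 0 t = [] := List.length_eq_zero_iff.mp (bl_length t)
      simp [this]
    · have hlast : t ⟨n - 1, by omega⟩ = 1 := ht.2.2 hn
      have hs := h (n - 1) (by omega)
      have htake : (bl n t).take ((n - 1) + 1) = bl n t := by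
        apply List.take_of_length_le; rw [bl_length]; omega
    
      rw [htake, hlast] at hs
      rw [hs]; omega
  · intro j hj
    rw [h j hj]
    have := ht.1 ⟨j, hj⟩
    omega

lemma inv_inSn (n : ℕ) (l : List ℕ) (hlen : l.length = n) (hsum : l.sum = n)
    (hps : ∀ j < n, j + 1 ≤ (l.take (j + 1)).sum) :
    InSn n (fun i => (l.take (i.1 + 1)).sum - i.1) := by
  refine ⟨fun i => ?_, fun i h => ?_, fun h => ?_⟩
  · show 1 ≤ (l.take (i.1 + 1)).sum - i.1
    have := hps i.1 i.2
    omega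
  · show (l.take (i + 1)).sum - i ≤ (l.take (i + 1 + 1)).sum - (i + 1) + 1
    have h1 := hps i (by omega)
    have h2 := List.sum_take_succ l (i + 1) (by omega)
    omega
  · show (l.take ((n - 1) + 1)).sum - (n - 1) = 1
    have h1 : l.take ((n - 1) + 1) = l := by
      apply List.take_of_length_le; omega
    rw [h1, hsum]
    omega

lemma blinv (n : ℕ) (l : List ℕ) (hlen : l.length = n) (hsum : l.sum = n)
    (hps : ∀ j < n, j + 1 ≤ (l.take (j + 1)).sum) :
    bl n (fun i => (l.take (i.1 + 1)).sum - i.1) = l := by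
  apply List.ext_getElem (by rw [bl_length, hlen])
  intro i h1 h2
  have hi : i < n := by rwa [bl_length] at h1
  simp only [bl, List.getElem_ofFn, Fin.val_mk]
  split <;> rename_i hz
  · subst hz
    have := List.sum_take_succ l 0 (by omega)
    simpa using this
  · have e1 : i - 1 + 1 = i := by omega
    have h2' := List.sum_take_succ l i (by omega)
    have h3 := hps (i - 1) (by omega)
    rw [e1] at h3
    rw [e1]
    omega

lemma invbl (n : ℕ) (t : Fin n → ℕ) (ht : InSn n t) :
    (fun i : Fin n => (((bl n t).take (i.1 + 1)).sum - i.1)) = t := by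
  funext i
  have hs := bl_sum_take t ht i.1 i.2
  rw [Fin.eta] at hs
  simp only [hs]
  omega

def equivA (n : ℕ) : {t : Fin n → ℕ // InSn n t} ≃ Ln n where
  toFun t := ⟨bl n t.1, bl_inSn n t.1 t.2⟩
  invFun l := ⟨fun i => (l.1.take (i.1 + 1)).sum - i.1,
    inv_inSn n l.1 l.2.1 l.2.2.1 l.2.2.2⟩
  left_inv t := Subtype.ext (invbl n t.1 t.2)
  right_inv l := Subtype.ext (blinv n l.1 l.2.1 l.2.2.1 l.2.2.2)


/-- The number of sequences in `S_n` is the `n`-th Catalan number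
`C_n = binomial(2n, n) / (n + 1)`. -/
theorem card_Sn_eq_catalan (n : ℕ) (hn : 0 < n) :
    Nat.card {t : Fin n → ℕ // InSn n t} = Nat.choose (2 * n) n / (n + 1) := by
  rw [Nat.card_congr ((equivA n).trans (equivB n)), Nat.card_eq_fintype_card,
    DyckWord.card_dyckWord_semilength_eq_catalan, catalan_eq_centralBinom_div]
  rfl
end

section
/- Let p be a 132-avoiding permutation of length n. Then p has a unique longest increasing subsequence if and only if the rank sequence R(p) = r(p_1) r(p_2) ... r(p_n) has a unique maximum, i.e., there is exactly one index i at which r(p_i) attains the maximal value of the sequence. -/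
namespace ULISAux

variable {n : ℕ} {p : Equiv.Perm (Fin n)}

lemma rank_bdd (p : Equiv.Perm (Fin n)) (i : Fin n) :
    BddAbove {k : ℕ | ∃ s : Finset (Fin n), IncSubseq p s ∧ BeginsAt s i ∧ s.card = k} := by
  refine ⟨n, ?_⟩
  rintro k ⟨s, -, -, rfl⟩
  simpa using s.card_le_univ

lemma singleton_mem (p : Equiv.Perm (Fin n)) (i : Fin n) :
    (1 : ℕ) ∈ {k : ℕ | ∃ s : Finset (Fin n), IncSubseq p s ∧ BeginsAt s i ∧ s.card = k} := by
  refine ⟨{i}, ?_, ⟨Finset.mem_singleton_self i, ?_⟩, Finset.card_singleton i⟩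
  · intro a ha b hb hab
    rw [Finset.mem_singleton] at ha hb
    rw [ha, hb] at hab; exact absurd hab (lt_irrefl i)
  · intro a ha
    rw [Finset.mem_singleton] at ha
    exact le_of_eq ha.symm

lemma exists_optimal (p : Equiv.Perm (Fin n)) (i : Fin n) :
    ∃ s : Finset (Fin n), IncSubseq p s ∧ BeginsAt s i ∧ s.card = rank p i :=
  Nat.sSup_mem ⟨1, singleton_mem p i⟩ (rank_bdd p i)

lemma card_le_rank {s : Finset (Fin n)} {i : Fin n} (hs : IncSubseq p s)
    (hb : BeginsAt s i) : s.card ≤ rank p i :=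
  le_csSup (rank_bdd p i) ⟨s, hs, hb, rfl⟩

lemma one_le_rank (p : Equiv.Perm (Fin n)) (i : Fin n) : 1 ≤ rank p i :=
  le_csSup (rank_bdd p i) (singleton_mem p i)

lemma rank_lt {i j : Fin n} (hij : i < j) (hpij : p i < p j) :
    rank p j < rank p i := by
  obtain ⟨s, hs, hb, hc⟩ := exists_optimal p j
  have hins : i ∉ s := fun h => absurd (hb.2 i h) (not_le.mpr hij)
  have hinc : IncSubseq p (insert i s) := by
    intro a ha b hbm hab
    rw [Finset.mem_insert] at ha hbm
    rcases ha with rfl | ha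
    · rcases hbm with rfl | hbm
      · exact absurd hab (lt_irrefl _)
      · rcases (hb.2 b hbm).eq_or_lt with h | h
        · exact h ▸ hpij
        · exact hpij.trans (hs j hb.1 b hbm h)
    · rcases hbm with rfl | hbm
      · exact absurd (lt_of_lt_of_le hij (hb.2 a ha)) (not_lt.mpr hab.le)
      · exact hs a ha b hbm hab
  have hbeg : BeginsAt (insert i s) i := by
    refine ⟨Finset.mem_insert_self i s, ?_⟩
    intro a ha
    rw [Finset.mem_insert] at ha
    rcases ha with rfl | ha
    · exact le_refl a
    · exact hij.le.trans (hb.2 a ha)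
  have := card_le_rank hinc hbeg
  rw [Finset.card_insert_of_notMem hins, hc] at this
  omega

lemma rank_anti {s : Finset (Fin n)} (hs : IncSubseq p s) {a b : Fin n}
    (ha : a ∈ s) (hb : b ∈ s) (hab : a < b) : rank p b < rank p a :=
  rank_lt hab (hs a ha b hb hab)

lemma rank_le_of_mem {s : Finset (Fin n)} {i : Fin n} (hs : IncSubseq p s)
    (hb : BeginsAt s i) {x : Fin n} (hx : x ∈ s) : rank p x ≤ rank p i := by
  rcases (hb.2 x hx).eq_or_lt with h | h
  · exact le_of_eq (by rw [h])
  · exact (rank_anti hs hb.1 hx h).le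

lemma exists_rank_eq {s : Finset (Fin n)} {i : Fin n} (hs : IncSubseq p s)
    (hb : BeginsAt s i) (hc : s.card = rank p i) {r : ℕ} (h1 : 1 ≤ r)
    (h2 : r ≤ rank p i) : ∃ a ∈ s, rank p a = r := by
  have hinj : Set.InjOn (rank p) s := by
    intro a ha b hb' hab
    rcases lt_trichotomy a b with h | h | h
    · exact absurd hab (rank_anti hs ha hb' h).ne'
    · exact h
    · exact absurd hab (rank_anti hs hb' ha h).ne
  have hsub : s.image (rank p) ⊆ Finset.Icc 1 (rank p i) := by
    intro r' hr'
    rw [Finset.mem_image] at hr'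
    obtain ⟨x, hx, rfl⟩ := hr'
    exact Finset.mem_Icc.mpr ⟨one_le_rank p x, rank_le_of_mem hs hb hx⟩
  have heq : s.image (rank p) = Finset.Icc 1 (rank p i) := by
    apply Finset.eq_of_subset_of_card_le hsub
    rw [Finset.card_image_of_injOn hinj, hc, Nat.card_Icc]
    omega
  have : r ∈ s.image (rank p) := heq ▸ Finset.mem_Icc.mpr ⟨h1, h2⟩
  rw [Finset.mem_image] at this
  obtain ⟨a, ha, hra⟩ := this
  exact ⟨a, ha, hra⟩

lemma mem_top_eq {s : Finset (Fin n)} {i : Fin n} (hs : IncSubseq p s)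
    (hb : BeginsAt s i) {a : Fin n} (ha : a ∈ s) (hr : rank p i ≤ rank p a) :
    a = i := by
  rcases (hb.2 a ha).eq_or_lt with h | h
  · exact h.symm
  · exact absurd hr (not_le.mpr (rank_anti hs hb.1 ha h))

lemma agree (hp : Avoids132 p) {i : Fin n} {s t : Finset (Fin n)}
    (hs : IncSubseq p s) (hbs : BeginsAt s i) (hcs : s.card = rank p i)
    (ht : IncSubseq p t) (hbt : BeginsAt t i) (hct : t.card = rank p i) :
    ∀ k r a b, rank p i - r ≤ k → 1 ≤ r → a ∈ s → b ∈ t →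
      rank p a = r → rank p b = r → a = b := by
  intro k
  induction k with
  | zero =>
    intro r a b hk h1 ha hb hra hrb
    have hM : rank p i ≤ r := by omega
    rw [mem_top_eq hs hbs ha (by omega), mem_top_eq ht hbt hb (by omega)]
  | succ k ih =>
    intro r a b hk h1 ha hb hra hrb
    by_cases hM : rank p i ≤ r
    · rw [mem_top_eq hs hbs ha (by omega), mem_top_eq ht hbt hb (by omega)]
    · push_neg at hM
      obtain ⟨c, hc, hrc⟩ := exists_rank_eq hs hbs hcs (by omega : 1 ≤ r + 1) (by omega)
      obtain ⟨d, hd, hrd⟩ := exists_rank_eq ht hbt hct (by omega : 1 ≤ r + 1) (by omega)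
      have hcd : c = d := ih (r + 1) c d (by omega) (by omega) hc hd hrc hrd
      subst hcd
      have hca : c < a := by
        rcases lt_trichotomy c a with h | h | h
        · exact h
        · exact absurd (h ▸ hra ▸ hrc) (by omega)
        · exact absurd (hra ▸ hrc ▸ rank_anti hs ha hc h) (by omega)
      have hcb : c < b := by
        rcases lt_trichotomy c b with h | h | h
        · exact h
        · exact absurd (h ▸ hrb ▸ hrd) (by omega)
        · exact absurd (hrb ▸ hrd ▸ rank_anti ht hb hd h) (by omega)
      have hpca : p c < p a := hs c hc a ha hca
      have hpcb : p c < p b := ht c hd b hb hcb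
      rcases lt_trichotomy a b with h | h | h
      · rcases lt_trichotomy (p a) (p b) with h' | h' | h'
        · exact absurd (rank_lt h h') (by omega)
        · exact p.injective h'
        · exact absurd ⟨c, a, b, hca, h, hpcb, h'⟩ hp
      · exact h
      · rcases lt_trichotomy (p a) (p b) with h' | h' | h'
        · exact absurd ⟨c, b, a, hcb, h, hpca, h'⟩ hp
        · exact p.injective h'
        · exact absurd (rank_lt h h') (by omega)

lemma optimal_unique (hp : Avoids132 p) {i : Fin n} {s t : Finset (Fin n)}
    (hs : IncSubseq p s) (hbs : BeginsAt s i) (hcs : s.card = rank p i)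
    (ht : IncSubseq p t) (hbt : BeginsAt t i) (hct : t.card = rank p i) :
    s = t := by
  ext x
  constructor <;> intro hx
  · obtain ⟨b, hb, hrb⟩ := exists_rank_eq ht hbt hct (one_le_rank p x)
      (rank_le_of_mem hs hbs hx)
    exact (agree hp hs hbs hcs ht hbt hct (rank p i) (rank p x) x b (by omega)
      (one_le_rank p x) hx hb rfl hrb) ▸ hb
  · obtain ⟨a, ha, hra⟩ := exists_rank_eq hs hbs hcs (one_le_rank p x)
      (rank_le_of_mem ht hbt hx)
    exact (agree hp hs hbs hcs ht hbt hct (rank p i) (rank p x) a x (by omega)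
      (one_le_rank p x) ha hx hra rfl) ▸ ha

end ULISAux

/-- A 132-avoiding permutation of positive length has a unique longest
increasing subsequence iff its rank sequence attains its maximal value at exactly
one index. -/
theorem hasULIS_iff_unique_max_rank (n : ℕ) (hn : 0 < n) (p : Equiv.Perm (Fin n))
    (hp : Avoids132 p) :
    HasULIS p ↔ ∃! i : Fin n, ∀ j : Fin n, rank p j ≤ rank p i := by
  have hne : Nonempty (Fin n) := ⟨⟨0, hn⟩⟩
  obtain ⟨im, him⟩ := Finite.exists_max (rank p)
  -- any increasing subsequence has card ≤ rank p im
  have hbound : ∀ u : Finset (Fin n), IncSubseq p u → u.card ≤ rank p im := by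
    intro u hu
    rcases Finset.eq_empty_or_nonempty u with rfl | hune
    · simp
    · have hbm : BeginsAt u (u.min' hune) :=
        ⟨u.min'_mem hune, fun a ha => u.min'_le a ha⟩
      exact (ULISAux.card_le_rank hu hbm).trans (him _)
  constructor
  · rintro ⟨s, ⟨hsinc, hsmax⟩, hsuniq⟩
    refine ⟨im, him, ?_⟩
    intro y hy
    have hrank_eq : rank p y = rank p im := le_antisymm (him y) (hy im)
    obtain ⟨sy, hsy, hby, hcy⟩ := ULISAux.exists_optimal p y
    obtain ⟨si, hsi, hbi, hci⟩ := ULISAux.exists_optimal p im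
    have hsy_max : ∀ u : Finset (Fin n), IncSubseq p u → u.card ≤ sy.card := by
      intro u hu; rw [hcy, hrank_eq]; exact hbound u hu
    have hsi_max : ∀ u : Finset (Fin n), IncSubseq p u → u.card ≤ si.card := by
      intro u hu; rw [hci]; exact hbound u hu
    have h1 : sy = s := hsuniq sy ⟨hsy, hsy_max⟩
    have h2 : si = s := hsuniq si ⟨hsi, hsi_max⟩
    have hysi : y ∈ si := by rw [h2, ← h1]; exact hby.1
    have himsy : im ∈ sy := by rw [h1, ← h2]; exact hbi.1
    exact le_antisymm (hby.2 im himsy) (hbi.2 y hysi)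
  · rintro ⟨i, hi, hiu⟩
    obtain ⟨s, hsinc, hbs, hcs⟩ := ULISAux.exists_optimal p i
    have him_eq : rank p im = rank p i := le_antisymm (hi im) (him i)
    have hsmax : ∀ u : Finset (Fin n), IncSubseq p u → u.card ≤ s.card := by
      intro u hu; rw [hcs, ← him_eq]; exact hbound u hu
    refine ⟨s, ⟨hsinc, hsmax⟩, ?_⟩
    rintro t ⟨htinc, htmax⟩
    have hst : s.card ≤ t.card := htmax s hsinc
    have htpos : 0 < t.card := lt_of_lt_of_le (hcs ▸ ULISAux.one_le_rank p i) hst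
    have htne : t.Nonempty := Finset.card_pos.mp htpos
    set m := t.min' htne with hm
    have hbt : BeginsAt t m := ⟨t.min'_mem htne, fun a ha => t.min'_le a ha⟩
    have hct : t.card = rank p m := by
      have h1 : t.card ≤ rank p m := ULISAux.card_le_rank htinc hbt
      have h2 : rank p m ≤ rank p i := hi m
      omega
    have hmmax : ∀ j : Fin n, rank p j ≤ rank p m := by
      intro j
      have : rank p i ≤ rank p m := by omega
      exact (hi j).trans this
    have hmi : m = i := hiu m hmmax
    rw [hmi] at hbt hct
    exact (ULISAux.optimal_unique hp hsinc hbs hcs htinc hbt hct).symm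
end

section
/- Let n be a positive integer and let T = t_1 t_2 ... t_n be a sequence in S_n whose maximal value k is attained at more than one position. Let i < j be the last two positions of T with t_i = t_j = k, and let f(T) be the sequence obtained from T by increasing every entry in positions i, i+1, ..., j−1 by one. Then f(T) lies in S_n and its maximal value (namely k+1) is attained at exactly one position. -/
/-- If `t ∈ S_n` has maximal value `k` attained at more than one
position, and `i < j` are the last two positions where `k` is attained, then the
sequence `f(t)`, obtained by adding one to every entry in positions `[i, j)`, lies
in `S_n` and its maximal value `k + 1` is attained at exactly one position. -/
theorem f_maps_into_Tn' (n : ℕ) (t : Fin n → ℕ) (ht : InSn n t) (k : ℕ)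
    (hmax : ∀ l : Fin n, t l ≤ k) (i j : Fin n) (hij : i < j)
    (hti : t i = k) (htj : t j = k)
    (hjlast : ∀ l : Fin n, j < l → t l ≠ k)
    (hinext : ∀ l : Fin n, i < l → l < j → t l ≠ k) :
    InSn n (fun l : Fin n => if i ≤ l ∧ l < j then t l + 1 else t l) ∧
    (∀ l : Fin n, (if i ≤ l ∧ l < j then t l + 1 else t l) ≤ k + 1) ∧
    (∃! l : Fin n, (if i ≤ l ∧ l < j then t l + 1 else t l) = k + 1) := by
  obtain ⟨hpos, hstep, hlast⟩ := ht
  have hijv : (i : ℕ) < (j : ℕ) := hij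
  refine ⟨⟨?_, ?_, ?_⟩, ?_, ?_⟩
  · intro l
    have := hpos l
    simp only []
    split_ifs <;> omega
  · intro m h
    have key : t ⟨m, Nat.lt_of_succ_lt h⟩ ≤ t ⟨m + 1, h⟩ + 1 := hstep m h
    have hm1 := hmax ⟨m, Nat.lt_of_succ_lt h⟩
    simp only [Fin.le_def, Fin.lt_def]
    split_ifs with hA hB hB
    · omega
    · -- a in [i,j), b not: then b = j
      have hbj : (⟨m + 1, h⟩ : Fin n) = j := by
        apply Fin.ext
        simp only [Fin.le_def, Fin.lt_def] at hA hB ⊢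
        omega
      rw [hbj, htj]
      omega
    · omega
    · omega
  · intro h0
    have hjn := j.isLt
    have := hlast h0
    simp only [Fin.le_def, Fin.lt_def]
    split_ifs with hc
    · omega
    · exact this
  · intro l
    have := hmax l
    split_ifs <;> omega
  · refine ⟨i, ?_, ?_⟩
    · show (if i ≤ i ∧ i < j then t i + 1 else t i) = k + 1
      rw [if_pos ⟨le_refl i, hij⟩, hti]
    · intro l hl
      replace hl : (if i ≤ l ∧ l < j then t l + 1 else t l) = k + 1 := hl
      by_cases hL : i ≤ l ∧ l < j
      · rw [if_pos hL] at hl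
        have htl : t l = k := by omega
        by_contra hne
        have hil : i < l := lt_of_le_of_ne hL.1 (fun hc => hne hc.symm)
        exact hinext l hil hL.2 htl
      · rw [if_neg hL] at hl
        have := hmax l
        omega
end

section
/- The map f : T_n → T'_n is injective: if T and T' are two sequences in T_n with f(T) = f(T'), then T = T'. -/
/-- The map `f : T_n → T'_n` is injective: if `t` and `t'` are two
sequences in `T_n` (with respective maximal values `k`, `k'` and last two maximal
positions `i < j`, `i' < j'`) and `f(t) = f(t')`, then `t = t'`. -/
theorem f_injective (n : ℕ)
    (t : Fin n → ℕ) (ht : InSn n t) (k : ℕ)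
    (hmax : ∀ l : Fin n, t l ≤ k) (i j : Fin n) (hij : i < j)
    (hti : t i = k) (htj : t j = k)
    (hjlast : ∀ l : Fin n, j < l → t l ≠ k)
    (hinext : ∀ l : Fin n, i < l → l < j → t l ≠ k)
    (t' : Fin n → ℕ) (ht' : InSn n t') (k' : ℕ)
    (hmax' : ∀ l : Fin n, t' l ≤ k') (i' j' : Fin n) (hij' : i' < j')
    (hti' : t' i' = k') (htj' : t' j' = k')
    (hjlast' : ∀ l : Fin n, j' < l → t' l ≠ k')
    (hinext' : ∀ l : Fin n, i' < l → l < j' → t' l ≠ k')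
    (heq : (fun l : Fin n => if i ≤ l ∧ l < j then t l + 1 else t l) =
           (fun l : Fin n => if i' ≤ l ∧ l < j' then t' l + 1 else t' l)) :
    t = t' := by
  have h1 : ∀ l : Fin n, (if i ≤ l ∧ l < j then t l + 1 else t l) =
      (if i' ≤ l ∧ l < j' then t' l + 1 else t' l) := fun l => congrFun heq l
  have hkk' : k = k' := by
    have a1 : k + 1 ≤ k' + 1 := by
      have h := h1 i
      rw [if_pos ⟨le_refl i, hij⟩, hti] at h
      rw [h]
      split
      · exact Nat.succ_le_succ (hmax' i)
      · exact le_trans (hmax' i) (Nat.le_succ k')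
    have a2 : k' + 1 ≤ k + 1 := by
      have h := (h1 i').symm
      rw [if_pos ⟨le_refl i', hij'⟩, hti'] at h
      rw [h]
      split
      · exact Nat.succ_le_succ (hmax i')
      · exact le_trans (hmax i') (Nat.le_succ k)
    omega
  have hii' : i = i' := by
    have a1 : ¬ i' < i := by
      intro hlt
      have h := h1 i'
      rw [if_neg (fun hc => absurd hc.1 (not_le.mpr hlt)),
          if_pos ⟨le_refl i', hij'⟩, hti'] at h
      have := hmax i'
      omega
    have a2 : ¬ i < i' := by
      intro hlt
      have h := h1 i
      rw [if_pos ⟨le_refl i, hij⟩, hti,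
          if_neg (fun hc => absurd hc.1 (not_le.mpr hlt))] at h
      have := hmax' i
      omega
    exact le_antisymm (not_lt.mp a1) (not_lt.mp a2)
  have hjj' : j = j' := by
    have a1 : ¬ j < j' := by
      intro hlt
      have h := h1 j'
      rw [if_neg (fun hc => absurd hc.2 (not_lt.mpr (le_of_lt hlt))),
          if_neg (fun hc => lt_irrefl j' hc.2), htj'] at h
      exact hjlast j' hlt (h.trans hkk'.symm)
    have a2 : ¬ j' < j := by
      intro hlt
      have h := h1 j
      rw [if_neg (fun hc => lt_irrefl j hc.2),
          if_neg (fun hc => absurd hc.2 (not_lt.mpr (le_of_lt hlt))), htj] at h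
      exact hjlast' j hlt (h.symm.trans hkk')
    exact le_antisymm (not_lt.mp a2) (not_lt.mp a1)
  subst hii' hjj'
  funext l
  have h := h1 l
  by_cases hc : i ≤ l ∧ l < j
  · rw [if_pos hc, if_pos hc] at h; omega
  · rw [if_neg hc, if_neg hc] at h; exact h
end

section
/- For every positive integer n, there exists an injection from the set V_n(132) of 132-avoiding permutations of length n without a unique longest increasing subsequence into the set U_n(132) of 132-avoiding permutations of length n with a unique longest increasing subsequence; consequently |U_n(132)| ≥ |V_n(132)|. -/
namespace ULIS

variable {n : ℕ} (p : Equiv.Perm (Fin n))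

def chainSet (i : Fin n) : Set ℕ :=
  {k : ℕ | ∃ s : Finset (Fin n), IncSubseq p s ∧ BeginsAt s i ∧ s.card = k}

lemma rank_eq_sSup (i : Fin n) : rank p i = sSup (chainSet p i) := rfl

lemma one_mem_chainSet (i : Fin n) : 1 ∈ chainSet p i := by
  refine ⟨{i}, ?_, ⟨Finset.mem_singleton_self i, ?_⟩, Finset.card_singleton i⟩
  · intro a ha b hb hab
    rw [Finset.mem_singleton] at ha hb
    subst ha; subst hb; exact absurd hab (lt_irrefl _)
  · intro a ha; rw [Finset.mem_singleton] at ha; exact ha.ge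

lemma chainSet_bddAbove (i : Fin n) : BddAbove (chainSet p i) := by
  refine ⟨n, ?_⟩
  rintro k ⟨s, _, _, rfl⟩
  simpa using (Finset.card_le_univ s)

lemma rank_mem (i : Fin n) : rank p i ∈ chainSet p i :=
  Nat.sSup_mem ⟨1, one_mem_chainSet p i⟩ (chainSet_bddAbove p i)

lemma card_le_rank {i : Fin n} {s : Finset (Fin n)}
    (hs : IncSubseq p s) (hb : BeginsAt s i) : s.card ≤ rank p i :=
  le_csSup (chainSet_bddAbove p i) ⟨s, hs, hb, rfl⟩

lemma one_le_rank (i : Fin n) : 1 ≤ rank p i :=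
  le_csSup (chainSet_bddAbove p i) (one_mem_chainSet p i)

/-- chain extension downward: if `i < j` and `p i < p j` then `rank p j + 1 ≤ rank p i`. -/
lemma rank_succ_le {i j : Fin n} (hij : i < j) (hv : p i < p j) :
    rank p j + 1 ≤ rank p i := by
  obtain ⟨s, hs, hb, hc⟩ := rank_mem p j
  have hi : i ∉ s := fun h => absurd (hb.2 i h) (not_le.2 hij)
  refine le_csSup (chainSet_bddAbove p i) ⟨insert i s, ?_, ⟨Finset.mem_insert_self i s, ?_⟩, ?_⟩
  · intro a ha b hbmem hab
    rcases Finset.mem_insert.1 ha with ha' | ha'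
    · subst ha'
      rcases Finset.mem_insert.1 hbmem with hb' | hb'
      · exact absurd hb' (by intro h; subst h; exact absurd hab (lt_irrefl _))
      · rcases eq_or_lt_of_le (hb.2 b hb') with hjb | hjb
        · rw [← hjb]; exact hv
        · exact hv.trans (hs j hb.1 b hb' hjb)
    · rcases Finset.mem_insert.1 hbmem with hb' | hb'
      · subst hb'
        exact absurd (hij.trans_le (hb.2 a ha')) (not_lt.2 hab.le)
      · exact hs a ha' b hb' hab
  · intro a ha
    rcases Finset.mem_insert.1 ha with ha' | ha'
    · exact ha' ▸ le_refl i
    · exact (hij.le.trans (hb.2 a ha'))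
  · rw [Finset.card_insert_of_notMem hi, hc]

/-- there is a next element of a maximal chain. -/
lemma exists_next {i : Fin n} (h2 : 2 ≤ rank p i) :
    ∃ j, i < j ∧ p i < p j ∧ rank p j + 1 = rank p i := by
  obtain ⟨s, hs, hb, hc⟩ := rank_mem p i
  have hne : (s.erase i).Nonempty := by
    rw [← Finset.card_pos, Finset.card_erase_of_mem hb.1, hc]
    omega
  set j := (s.erase i).min' hne with hj
  have hjmem : j ∈ s.erase i := Finset.min'_mem _ hne
  have hji : j ≠ i := (Finset.mem_erase.1 hjmem).1
  have hjs : j ∈ s := (Finset.mem_erase.1 hjmem).2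
  have hij : i < j := lt_of_le_of_ne (hb.2 j hjs) (Ne.symm hji)
  have hv : p i < p j := hs i hb.1 j hjs hij
  refine ⟨j, hij, hv, ?_⟩
  have h1 : s.card - 1 ≤ rank p j := by
    have : (s.erase i).card ≤ rank p j := by
      refine card_le_rank p ?_ ⟨hjmem, fun a ha => Finset.min'_le _ a ha⟩
      intro a ha b hbmem hab
      exact hs a (Finset.mem_of_mem_erase ha) b (Finset.mem_of_mem_erase hbmem) hab
    rwa [Finset.card_erase_of_mem hb.1] at this
  have h2' : rank p j + 1 ≤ rank p i := rank_succ_le p hij hv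
  omega

end ULIS


namespace ULIS

variable {n : ℕ} {p : Equiv.Perm (Fin n)}

lemma next_unique (hav : Avoids132 p) {i j₁ j₂ : Fin n}
    (h1 : i < j₁) (h2 : i < j₂) (v1 : p i < p j₁) (v2 : p i < p j₂)
    (hr : rank p j₁ = rank p j₂) : j₁ = j₂ := by
  rcases lt_trichotomy j₁ j₂ with hj | hj | hj
  · rcases lt_trichotomy (p j₁) (p j₂) with hv | hv | hv
    · exact absurd (rank_succ_le p hj hv) (by omega)
    · exact p.injective hv
    · exact absurd ⟨i, j₁, j₂, h1, hj, v2, hv⟩ hav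
  · exact hj
  · rcases lt_trichotomy (p j₂) (p j₁) with hv | hv | hv
    · exact absurd (rank_succ_le p hj hv) (by omega)
    · exact (p.injective hv).symm
    · exact absurd ⟨i, j₂, j₁, h2, hj, v1, hv⟩ hav

lemma max_chain_unique (hav : Avoids132 p) :
    ∀ (k : ℕ) (i : Fin n) (s s' : Finset (Fin n)), rank p i = k →
      IncSubseq p s → BeginsAt s i → s.card = rank p i →
      IncSubseq p s' → BeginsAt s' i → s'.card = rank p i → s = s' := by
  intro k
  induction k using Nat.strong_induction_on with
  | _ k IH =>
    intro i s s' hk hs hbs hcs hs' hbs' hcs'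
    rcases le_or_gt (rank p i) 1 with hr1 | hr1
    · have hr : rank p i = 1 := le_antisymm hr1 (one_le_rank p i)
      have e1 : s = {i} := by
        rw [hr] at hcs
        obtain ⟨x, hx⟩ := Finset.card_eq_one.1 hcs
        rw [hx] at hbs ⊢
        rw [Finset.mem_singleton.1 hbs.1]
      have e2 : s' = {i} := by
        rw [hr] at hcs'
        obtain ⟨x, hx⟩ := Finset.card_eq_one.1 hcs'
        rw [hx] at hbs' ⊢
        rw [Finset.mem_singleton.1 hbs'.1]
      rw [e1, e2]
    · -- rank ≥ 2 : erase i from both chains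
      have key : ∀ (u : Finset (Fin n)), IncSubseq p u → BeginsAt u i → u.card = rank p i →
          ∃ j, i < j ∧ p i < p j ∧ rank p j + 1 = rank p i ∧
            IncSubseq p (u.erase i) ∧ BeginsAt (u.erase i) j ∧
            (u.erase i).card = rank p j := by
        intro u hu hbu hcu
        have hne : (u.erase i).Nonempty := by
          rw [← Finset.card_pos, Finset.card_erase_of_mem hbu.1, hcu]; omega
        set j := (u.erase i).min' hne with hj
        have hjmem : j ∈ u.erase i := Finset.min'_mem _ hne
        have hji : j ≠ i := (Finset.mem_erase.1 hjmem).1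
        have hju : j ∈ u := (Finset.mem_erase.1 hjmem).2
        have hij : i < j := lt_of_le_of_ne (hbu.2 j hju) (Ne.symm hji)
        have hv : p i < p j := hu i hbu.1 j hju hij
        have hinc : IncSubseq p (u.erase i) := fun a ha b hbm hab =>
          hu a (Finset.mem_of_mem_erase ha) b (Finset.mem_of_mem_erase hbm) hab
        have hbeg : BeginsAt (u.erase i) j := ⟨hjmem, fun a ha => Finset.min'_le _ a ha⟩
        have hle : (u.erase i).card ≤ rank p j := card_le_rank p hinc hbeg
        have hge : rank p j + 1 ≤ rank p i := rank_succ_le p hij hv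
        have hcard : (u.erase i).card = u.card - 1 := Finset.card_erase_of_mem hbu.1
        refine ⟨j, hij, hv, by omega, hinc, hbeg, by omega⟩
      obtain ⟨j, hij, hv, hrj, hinc, hbeg, hcard⟩ := key s hs hbs hcs
      obtain ⟨j', hij', hv', hrj', hinc', hbeg', hcard'⟩ := key s' hs' hbs' hcs'
      have hjj : j = j' := next_unique hav hij hij' hv hv' (by omega)
      subst hjj
      have := IH (rank p j) (by omega) j (s.erase i) (s'.erase i) rfl
        hinc hbeg hcard hinc' hbeg' hcard'
      have e1 : s = insert i (s.erase i) := (Finset.insert_erase hbs.1).symm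
      have e2 : s' = insert i (s'.erase i) := (Finset.insert_erase hbs'.1).symm
      rw [e1, e2, this]

end ULIS

namespace ULIS

variable {n : ℕ} {p : Equiv.Perm (Fin n)}

/-- any nonempty increasing subsequence has card at most the rank of its first element -/
lemma card_le_rank_min' {s : Finset (Fin n)} (hs : IncSubseq p s) (hne : s.Nonempty) :
    s.card ≤ rank p (s.min' hne) :=
  card_le_rank p hs ⟨Finset.min'_mem _ _, fun a ha => Finset.min'_le _ a ha⟩

lemma hasULIS_of_unique_argmax (hav : Avoids132 p)
    (i₀ : Fin n) (hmax : ∀ j, rank p j ≤ rank p i₀)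
    (huniq : ∀ j, (∀ l, rank p l ≤ rank p j) → j = i₀) : HasULIS p := by
  obtain ⟨s₀, hs₀, hb₀, hc₀⟩ := rank_mem p i₀
  refine ⟨s₀, ⟨hs₀, ?_⟩, ?_⟩
  · intro t ht
    rcases t.eq_empty_or_nonempty with rfl | hne
    · simp
    · calc t.card ≤ rank p (t.min' hne) := card_le_rank_min' ht hne
        _ ≤ rank p i₀ := hmax _
        _ = s₀.card := hc₀.symm
  · rintro s ⟨hs, hsmax⟩
    have h1 : s₀.card ≤ s.card := hsmax s₀ hs₀
    have hne : s.Nonempty := by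
      rw [← Finset.card_pos]
      have := one_le_rank p i₀
      omega
    set j := s.min' hne with hj
    have h2 : s.card ≤ rank p j := card_le_rank_min' hs hne
    have h3 : rank p j ≤ rank p i₀ := hmax j
    have hcs : s.card = rank p i₀ := by omega
    have hrj : rank p j = rank p i₀ := by omega
    have hji : j = i₀ := huniq j (fun l => (hmax l).trans_eq hrj.symm)
    exact max_chain_unique hav (rank p i₀) i₀ s s₀ rfl hs
      (by rw [← hji]; exact ⟨Finset.min'_mem _ _, fun a ha => Finset.min'_le _ a ha⟩)
      (by omega) hs₀ hb₀ hc₀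

/-- the rank of the last position is 1 -/
lemma rank_last (hn : 0 < n) : rank p ⟨n - 1, Nat.sub_lt hn Nat.one_pos⟩ = 1 := by
  set i : Fin n := ⟨n - 1, Nat.sub_lt hn Nat.one_pos⟩ with hi
  refine le_antisymm ?_ (one_le_rank p i)
  obtain ⟨s, hs, hb, hc⟩ := rank_mem p i
  rw [← hc]
  have : s ⊆ {i} := by
    intro a ha
    rw [Finset.mem_singleton]
    have h1 : i ≤ a := hb.2 a ha
    have h2 : (a : ℕ) ≤ n - 1 := by omega
    have : (a : ℕ) = n - 1 := le_antisymm h2 h1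
    exact Fin.ext this
  calc s.card ≤ ({i} : Finset (Fin n)).card := Finset.card_le_card this
    _ = 1 := Finset.card_singleton i

/-- P2 for rank sequences: rank drops by at most one at each step. -/
lemma rank_step (hav : Avoids132 p) {i j : Fin n} (hij : (i : ℕ) + 1 = (j : ℕ)) :
    rank p i ≤ rank p j + 1 := by
  rcases le_or_gt (rank p i) 1 with h1 | h1
  · omega
  · obtain ⟨x, hix, hvx, hrx⟩ := exists_next p h1
    have hij' : i < j := by rw [Fin.lt_def]; omega
    rcases lt_trichotomy x j with hxj | hxj | hxj
    · exact absurd hxj (by rw [Fin.lt_def] at hix ⊢; omega)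
    · subst hxj; omega
    · have hvj : p j < p x := by
        rcases lt_trichotomy (p j) (p x) with hv | hv | hv
        · exact hv
        · exact absurd (p.injective hv) (by intro h; subst h; exact absurd hxj (lt_irrefl _))
        · exact absurd ⟨i, j, x, hij', hxj, hvx, hv⟩ hav
      have := rank_succ_le p hxj hvj
      omega

/-- the order rule relation -/
def Ltt (t : Fin n → ℕ) (i j : Fin n) : Prop := ∀ l, i ≤ l → l < j → t j < t l

/-- comparison rule, forward direction -/
lemma ltt_of_lt (hav : Avoids132 p) {i j : Fin n} (hij : i < j) (hv : p i < p j) :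
    Ltt (rank p) i j := by
  intro l hil hlj
  rcases eq_or_lt_of_le hil with rfl | hil'
  · exact rank_succ_le p hij hv
  · by_contra hcon
    push_neg at hcon
    rcases lt_trichotomy (p l) (p i) with hv1 | hv1 | hv1
    · have : p l < p j := hv1.trans hv
      have := rank_succ_le p hlj this
      omega
    · exact absurd (p.injective hv1) (by intro h; subst h; exact absurd hil' (lt_irrefl _))
    · rcases lt_trichotomy (p l) (p j) with hv2 | hv2 | hv2
      · have := rank_succ_le p hlj hv2
        omega
      · exact absurd (p.injective hv2) (by intro h; subst h; exact absurd hlj (lt_irrefl _))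
      · exact absurd ⟨i, l, j, hil', hlj, hv, hv2⟩ hav

/-- comparison rule, backward direction -/
lemma lt_of_ltt (hav : Avoids132 p) :
    ∀ (k : ℕ) {i j : Fin n}, rank p i ≤ k → i < j → Ltt (rank p) i j → p i < p j := by
  intro k
  induction k using Nat.strong_induction_on with
  | _ k IH =>
    intro i j hk hij hltt
    have hji : rank p j < rank p i := hltt i (le_refl i) hij
    have h2 : 2 ≤ rank p i := by have := one_le_rank p j; omega
    obtain ⟨x, hix, hvx, hrx⟩ := exists_next p h2
    rcases lt_trichotomy x j with hxj | hxj | hxj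
    · have hlttxj : Ltt (rank p) x j := fun l hxl hlj => hltt l (hix.le.trans hxl) hlj
      have hje : rank p x < rank p i := by omega
      have : p x < p j := IH (rank p x) (by omega) (le_refl _) hxj hlttxj
      exact hvx.trans this
    · subst hxj; exact hvx
    · by_contra hcon
      push_neg at hcon
      have hvj : p j < p i := lt_of_le_of_ne hcon (by
        intro h; exact absurd (p.injective h) (by intro h2; subst h2; exact absurd hij (lt_irrefl _)))
      have : rank p x + 1 ≤ rank p j := rank_succ_le p hxj (hvj.trans hvx)
      omega

lemma lt_iff_ltt (hav : Avoids132 p) {i j : Fin n} (hij : i < j) :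
    p i < p j ↔ Ltt (rank p) i j :=
  ⟨ltt_of_lt hav hij, fun h => lt_of_ltt hav (rank p i) (le_refl _) hij h⟩

end ULIS

namespace ULIS

variable {n : ℕ}

/-- two 132-avoiding permutations with the same rank sequence are equal -/
lemma rank_injective {p q : Equiv.Perm (Fin n)} (hp : Avoids132 p) (hq : Avoids132 q)
    (h : rank p = rank q) : p = q := by
  have hiff : ∀ i j : Fin n, p i < p j → q i < q j := by
    intro i j hv
    rcases lt_trichotomy i j with hij | hij | hij
    · have := ltt_of_lt hp hij hv
      rw [h] at this
      exact lt_of_ltt hq (rank q i) (le_refl _) hij this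
    · subst hij; exact absurd hv (lt_irrefl _)
    · by_contra hcon
      push_neg at hcon
      have hne : q j ≠ q i := fun hh => by
        have := q.injective hh
        subst this; exact absurd hij (lt_irrefl _)
      have hqv : q j < q i := lt_of_le_of_ne hcon hne
      have := ltt_of_lt hq hij hqv
      rw [← h] at this
      have := lt_of_ltt hp (rank p j) (le_refl _) hij this
      omega
  -- f := q ∘ p.symm is strict mono and surjective, hence the identity
  have hmono : StrictMono (fun x => q (p.symm x)) := by
    intro a b hab
    have : p (p.symm a) < p (p.symm b) := by
      rw [Equiv.apply_symm_apply, Equiv.apply_symm_apply]; exact hab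
    exact hiff _ _ this
  have hid : ∀ x, q (p.symm x) = x := by
    have hsurj : Function.Surjective (fun x => q (p.symm x)) :=
      q.surjective.comp p.symm.surjective
    let e : Fin n ≃o Fin n := (StrictMono.orderIsoOfSurjective _ hmono hsurj)
    have : e = OrderIso.refl (Fin n) := Subsingleton.elim _ _
    intro x
    have := congrArg (fun g => (g : Fin n ≃o Fin n) x) this
    simpa [e, OrderIso.refl] using this
  ext i
  have := hid (p i)
  rw [Equiv.symm_apply_apply] at this
  exact congrArg Fin.val this.symm

end ULIS

namespace ULIS

variable {n : ℕ}

/-- the strict order on positions induced by a prospective rank sequence -/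
def prec (t : Fin n → ℕ) (i j : Fin n) : Prop :=
  (i < j ∧ Ltt t i j) ∨ (j < i ∧ ¬ Ltt t j i)

variable {t : Fin n → ℕ}

attribute [local instance] Classical.propDecidable

lemma not_ltt_iff {i j : Fin n} : ¬ Ltt t i j ↔ ∃ l, i ≤ l ∧ l < j ∧ t l ≤ t j := by
  unfold Ltt
  push_neg
  rfl

lemma prec_irrefl (i : Fin n) : ¬ prec t i i := by
  rintro (⟨h, _⟩ | ⟨h, _⟩) <;> exact absurd h (lt_irrefl _)

lemma prec_total {i j : Fin n} (hij : i ≠ j) : prec t i j ∨ prec t j i := by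
  rcases lt_trichotomy i j with h | h | h
  · by_cases hl : Ltt t i j
    · exact Or.inl (Or.inl ⟨h, hl⟩)
    · exact Or.inr (Or.inr ⟨h, hl⟩)
  · exact absurd h hij
  · by_cases hl : Ltt t j i
    · exact Or.inr (Or.inl ⟨h, hl⟩)
    · exact Or.inl (Or.inr ⟨h, hl⟩)

lemma prec_asymm {i j : Fin n} (h1 : prec t i j) (h2 : prec t j i) : False := by
  rcases h1 with ⟨h, hl⟩ | ⟨h, hl⟩ <;> rcases h2 with ⟨h', hl'⟩ | ⟨h', hl'⟩
  · exact absurd (h.trans h') (lt_irrefl _)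
  · exact hl' hl
  · exact hl hl'
  · exact absurd (h.trans h') (lt_irrefl _)

lemma prec_trans {x y z : Fin n} (h1 : prec t x y) (h2 : prec t y z) : prec t x z := by
  have hxz : x ≠ z := by
    rintro rfl
    exact prec_asymm h1 h2
  rcases h1 with ⟨hxy, l1⟩ | ⟨hyx, l1⟩
  · rcases h2 with ⟨hyz, l2⟩ | ⟨hzy, l2⟩
    · -- x < y < z, Ltt x y, Ltt y z
      refine Or.inl ⟨hxy.trans hyz, fun l hxl hlz => ?_⟩
      rcases lt_or_ge l y with hly | hly
      · exact lt_trans (l2 y (le_refl y) hyz) (l1 l hxl hly)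
      · exact l2 l hly hlz
    · -- x < y, z < y, Ltt x y, ¬ Ltt z y
      obtain ⟨l, hzl, hly, hle⟩ := not_ltt_iff.1 l2
      rcases lt_or_ge l x with hlx | hlx
      · -- l < x : so z ≤ l < x < y ; witness if z < x else...
        rcases lt_trichotomy x z with hxz' | hxz' | hxz'
        ·
          exact absurd (hzl.trans_lt (hlx.trans hxz')) (lt_irrefl _)
        · exact absurd hxz' hxz
        · -- z < x : show prec x z = ¬ Ltt z x with witness l
          refine Or.inr ⟨hxz', fun hL => ?_⟩
          exact absurd hle (not_le.2 (by
            have := hL l hzl hlx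
            have h2' := l1 x (le_refl x) hxy
            omega))
      · exact absurd hle (not_le.2 (l1 l hlx hly))
  · rcases h2 with ⟨hyz, l2⟩ | ⟨hzy, l2⟩
    · -- y < x, y < z, ¬ Ltt y x, Ltt y z
      obtain ⟨l, hyl, hlx, hle⟩ := not_ltt_iff.1 l1
      rcases lt_trichotomy x z with hxz' | hxz' | hxz'
      · -- x < z : show Ltt x z
        refine Or.inl ⟨hxz', fun l' hxl' hlz' => l2 l' (hyl.trans (hlx.le.trans hxl')) hlz'⟩
      · exact absurd hxz' hxz
      · -- z < x : show ¬ Ltt z x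
        refine Or.inr ⟨hxz', fun hL => ?_⟩
        rcases lt_or_ge l z with hlz | hlz
        · -- l < z : t z < t l from Ltt y z ; witness z itself
          have h3 : t z < t l := l2 l hyl hlz
          have h4 : t x < t z := hL z (le_refl z) hxz'
          omega
        · exact absurd hle (not_le.2 (hL l hlz hlx))
    · -- y < x, z < y : ¬ Ltt y x, ¬ Ltt z y : show ¬ Ltt z x
      obtain ⟨l1', hyl1, hl1x, hle1⟩ := not_ltt_iff.1 l1
      obtain ⟨l2', hzl2, hl2y, hle2⟩ := not_ltt_iff.1 l2
      refine Or.inr ⟨hzy.trans hyx, fun hL => ?_⟩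
      rcases le_or_gt (t y) (t x) with hyx' | hyx'
      · exact absurd (hle2.trans hyx') (not_le.2 (hL l2' hzl2 (hl2y.trans hyx)))
      · exact absurd hle1 (not_le.2 (hL l1' (hzl2.trans hl2y.le |>.trans hyl1) hl1x))

/-- the counting function of the order `prec t` -/
noncomputable def qfun (t : Fin n → ℕ) (i : Fin n) : Fin n :=
  ⟨(Finset.univ.filter (fun x => prec t x i)).card, by
    have h1 : (Finset.univ.filter (fun x => prec t x i)) ⊆ Finset.univ.erase i := by
      intro x hx
      rw [Finset.mem_filter] at hx
      refine Finset.mem_erase.2 ⟨?_, Finset.mem_univ x⟩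
      rintro rfl
      exact prec_irrefl x hx.2
    have h2 := Finset.card_le_card h1
    have h3 : (Finset.univ.erase i).card = n - 1 := by
      rw [Finset.card_erase_of_mem (Finset.mem_univ i), Finset.card_univ, Fintype.card_fin]
    have h4 : 0 < n := i.pos
    omega⟩

lemma qfun_lt_of_prec {i j : Fin n} (h : prec t i j) : qfun t i < qfun t j := by
  have hsub : (Finset.univ.filter (fun x => prec t x i)) ⊂
      (Finset.univ.filter (fun x => prec t x j)) := by
    refine Finset.ssubset_iff_of_subset ?_ |>.2 ⟨i, ?_, ?_⟩
    · intro x hx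
      rw [Finset.mem_filter] at hx ⊢
      exact ⟨Finset.mem_univ x, prec_trans hx.2 h⟩
    · rw [Finset.mem_filter]; exact ⟨Finset.mem_univ i, h⟩
    · rw [Finset.mem_filter]; push_neg; intro; exact prec_irrefl i
  exact Finset.card_lt_card hsub

lemma qfun_lt_iff {i j : Fin n} : qfun t i < qfun t j ↔ prec t i j := by
  constructor
  · intro h
    have hij : i ≠ j := by rintro rfl; exact absurd h (lt_irrefl _)
    rcases prec_total hij with hp | hp
    · exact hp
    · exact absurd (qfun_lt_of_prec hp) (not_lt.2 h.le)
  · exact qfun_lt_of_prec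

lemma qfun_bijective : Function.Bijective (qfun t) := by
  rw [Fintype.bijective_iff_injective_and_card]
  refine ⟨fun i j h => ?_, rfl⟩
  by_contra hij
  rcases prec_total hij with hp | hp
  · exact absurd h (ne_of_lt (qfun_lt_of_prec hp))
  · exact absurd h.symm (ne_of_lt (qfun_lt_of_prec hp))

/-- the permutation realizing the order `prec t` -/
noncomputable def qperm (t : Fin n → ℕ) : Equiv.Perm (Fin n) :=
  Equiv.ofBijective (qfun t) qfun_bijective

lemma qperm_lt_iff {i j : Fin n} : qperm t i < qperm t j ↔ prec t i j := qfun_lt_iff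

lemma qperm_avoids : Avoids132 (qperm t) := by
  rintro ⟨i, j, k, hij, hjk, h1, h2⟩
  have hik : prec t i k := qperm_lt_iff.1 h1
  have hkj : prec t k j := qperm_lt_iff.1 h2
  have hLik : Ltt t i k := by
    rcases hik with ⟨_, h⟩ | ⟨h, _⟩
    · exact h
    · exact absurd (hij.trans hjk) (not_lt.2 h.le)
  rcases hkj with ⟨h, _⟩ | ⟨_, hnL⟩
  · exact absurd hjk (not_lt.2 h.le)
  · obtain ⟨l, hjl, hlk, hle⟩ := not_ltt_iff.1 hnL
    exact absurd hle (not_le.2 (hLik l (hij.le.trans hjl) hlk))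

end ULIS

namespace ULIS

variable {n : ℕ} {t : Fin n → ℕ}

lemma qperm_rank (ht1 : ∀ i, 1 ≤ t i)
    (ht2 : ∀ i j : Fin n, (i : ℕ) + 1 = (j : ℕ) → t i ≤ t j + 1)
    (ht3 : ∀ h : 0 < n, t ⟨n - 1, Nat.sub_lt h Nat.one_pos⟩ = 1) :
    ∀ i, rank (qperm t) i = t i := by
  set q := qperm (n := n) t with hq
  have aux : ∀ (k : ℕ) (i : Fin n), n - (i : ℕ) ≤ k → rank q i = t i := by
    intro k
    induction k using Nat.strong_induction_on with
    | _ k IH =>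
      intro i hik
      have IH' : ∀ j : Fin n, i < j → rank q j = t j := by
        intro j hij
        have h1 : (i : ℕ) < (j : ℕ) := hij
        have h2 : (j : ℕ) < n := j.isLt
        exact IH (n - (j : ℕ)) (by omega) j (le_refl _)
      have hub : rank q i ≤ t i := by
        rcases le_or_gt (rank q i) 1 with h1 | h1
        · exact h1.trans (ht1 i)
        · obtain ⟨j, hij, hv, hr⟩ := exists_next q h1
          have hprec : prec t i j := qperm_lt_iff.1 hv
          have hLtt : Ltt t i j := by
            rcases hprec with ⟨_, h⟩ | ⟨h, _⟩
            · exact h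
            · exact absurd hij (not_lt.2 h.le)
          have htj : t j < t i := hLtt i (le_refl i) hij
          have := IH' j hij
          omega
      have hlb : t i ≤ rank q i := by
        rcases le_or_gt (t i) 1 with h1 | h1
        · exact h1.trans (one_le_rank q i)
        · have hn : 0 < n := i.pos
          set last : Fin n := ⟨n - 1, Nat.sub_lt hn Nat.one_pos⟩ with hlast
          have htlast : t last = 1 := ht3 hn
          have hilast : i < last := by
            rw [Fin.lt_def]
            have h2 : (i : ℕ) ≤ n - 1 := by have := i.isLt; omega
            rcases eq_or_lt_of_le h2 with he | he
            · exfalso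
              have : i = last := Fin.ext he
              rw [this, htlast] at h1
              omega
            · exact he
          set F := Finset.univ.filter (fun l => i < l ∧ t l < t i) with hF
          have hlastF : last ∈ F := by
            rw [hF, Finset.mem_filter]
            exact ⟨Finset.mem_univ _, hilast, by omega⟩
          have hne : F.Nonempty := ⟨last, hlastF⟩
          set j := F.min' hne with hj
          have hjF : j ∈ F := Finset.min'_mem _ _
          rw [hF, Finset.mem_filter] at hjF
          obtain ⟨-, hij, htj⟩ := hjF
          have ha : ∀ l, i < l → l < j → t i ≤ t l := by
            intro l hil hlj
            by_contra hcon
            push_neg at hcon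
            have : l ∈ F := by
              rw [hF, Finset.mem_filter]; exact ⟨Finset.mem_univ _, hil, hcon⟩
            exact absurd (Finset.min'_le _ l this) (not_le.2 hlj)
          have hb : t i ≤ t j + 1 := by
            have hj1 : 1 ≤ (j : ℕ) := by
              have : (i : ℕ) < (j : ℕ) := hij
              omega
            set j' : Fin n := ⟨(j : ℕ) - 1, by have := j.isLt; omega⟩ with hj'
            have hstep : t j' ≤ t j + 1 := ht2 j' j (by simp [hj']; omega)
            rcases eq_or_lt_of_le (show (i : ℕ) ≤ (j' : ℕ) by
                have : (i : ℕ) < (j : ℕ) := hij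
                simp [hj']; omega) with he | he
            · have : i = j' := Fin.ext he
              rw [← this] at hstep
              exact hstep
            · have hij' : i < j' := he
              have hj'j : j' < j := by
                rw [Fin.lt_def]
                simp [hj']; omega
              exact (ha j' hij' hj'j).trans hstep
          have hLtt : Ltt t i j := by
            intro l hil hlj
            rcases eq_or_lt_of_le hil with he | he
            · rw [← he]; exact htj
            · exact lt_of_lt_of_le htj (ha l he hlj)
          have hv : q i < q j := qperm_lt_iff.2 (Or.inl ⟨hij, hLtt⟩)
          have h2 := rank_succ_le q hij hv
          have := IH' j hij
          omega
      omega
  intro i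
  exact aux (n - (i : ℕ)) i (le_refl _)

end ULIS

namespace ULIS

variable {n : ℕ}

/-- the set of positions where `t` attains its maximum -/
def argmaxSet (t : Fin n → ℕ) : Finset (Fin n) :=
  Finset.univ.filter (fun i => ∀ j, t j ≤ t i)

lemma argmaxSet_nonempty (t : Fin n → ℕ) (hn : 0 < n) : (argmaxSet t).Nonempty := by
  have : (Finset.univ : Finset (Fin n)).Nonempty := by
    refine ⟨⟨0, hn⟩, Finset.mem_univ _⟩
  obtain ⟨i, -, hi⟩ := Finset.exists_max_image Finset.univ t this
  exact ⟨i, Finset.mem_filter.2 ⟨Finset.mem_univ _, fun j => hi j (Finset.mem_univ j)⟩⟩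

section bumpdef

variable (t : Fin n → ℕ)

noncomputable def bigB (h : 2 ≤ (argmaxSet t).card) : Fin n :=
  (argmaxSet t).max' (Finset.card_pos.1 (by omega))

noncomputable def smallA (h : 2 ≤ (argmaxSet t).card) : Fin n :=
  ((argmaxSet t).erase (bigB t h)).max' (Finset.card_pos.1 (by
    have hb : bigB t h ∈ argmaxSet t := Finset.max'_mem _ _
    rw [Finset.card_erase_of_mem hb]; omega))

noncomputable def bump : Fin n → ℕ :=
  if h : 2 ≤ (argmaxSet t).card then
    fun i => if smallA t h ≤ i ∧ i < bigB t h then t i + 1 else t i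
  else t

end bumpdef

variable {t : Fin n → ℕ} (h : 2 ≤ (argmaxSet t).card)

lemma bump_apply (i : Fin n) :
    bump t i = if smallA t h ≤ i ∧ i < bigB t h then t i + 1 else t i := by
  rw [bump, dif_pos h]

lemma bigB_mem : bigB t h ∈ argmaxSet t := Finset.max'_mem _ _

lemma smallA_mem : smallA t h ∈ argmaxSet t :=
  Finset.mem_of_mem_erase (Finset.max'_mem _ _)

lemma smallA_lt_bigB : smallA t h < bigB t h := by
  have h1 : smallA t h ∈ (argmaxSet t).erase (bigB t h) := Finset.max'_mem _ _
  have h2 := (Finset.mem_erase.1 h1).1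
  have h3 : smallA t h ≤ bigB t h :=
    Finset.le_max' _ _ (Finset.mem_of_mem_erase h1)
  exact lt_of_le_of_ne h3 h2

lemma le_t_bigB (i : Fin n) : t i ≤ t (bigB t h) := by
  have := bigB_mem (t := t) h
  rw [argmaxSet, Finset.mem_filter] at this
  exact this.2 i

lemma between_not_argmax {l : Fin n} (h1 : smallA t h < l) (h2 : l < bigB t h) :
    t l < t (bigB t h) := by
  rcases lt_or_ge (t l) (t (bigB t h)) with hc | hc
  · exact hc
  · exfalso
    have hmem : l ∈ argmaxSet t := by
      rw [argmaxSet, Finset.mem_filter]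
      exact ⟨Finset.mem_univ _, fun j => (le_t_bigB h j).trans hc⟩
    have : l ∈ (argmaxSet t).erase (bigB t h) :=
      Finset.mem_erase.2 ⟨ne_of_lt h2, hmem⟩
    exact absurd (Finset.le_max' _ l this) (not_le.2 h1)

lemma bump_smallA : bump t (smallA t h) = t (bigB t h) + 1 := by
  rw [bump_apply h, if_pos ⟨le_refl _, smallA_lt_bigB h⟩]
  have h1 : t (smallA t h) ≤ t (bigB t h) := le_t_bigB h _
  have h2 : t (bigB t h) ≤ t (smallA t h) := by
    have := smallA_mem (t := t) h
    rw [argmaxSet, Finset.mem_filter] at this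
    exact this.2 _
  omega

lemma bump_le (i : Fin n) : bump t i ≤ t (bigB t h) + 1 := by
  rw [bump_apply h]
  split
  · have := le_t_bigB h i; omega
  · have := le_t_bigB h i; omega

lemma bump_lt_of_ne {i : Fin n} (hi : i ≠ smallA t h) :
    bump t i < t (bigB t h) + 1 := by
  rw [bump_apply h]
  split
  · next hcase =>
    have h1 : smallA t h < i := lt_of_le_of_ne hcase.1 (Ne.symm hi)
    have := between_not_argmax h h1 hcase.2
    omega
  · have := le_t_bigB h i; omega

/-- the bumped sequence has its maximum exactly at smallA -/
lemma bump_argmax (j : Fin n) : bump t j ≤ bump t (smallA t h) := by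
  rw [bump_smallA h]; exact bump_le h j

lemma bump_argmax_unique {j : Fin n} (hj : ∀ l, bump t l ≤ bump t j) : j = smallA t h := by
  by_contra hne
  have h1 := bump_lt_of_ne h hne
  have h2 := hj (smallA t h)
  rw [bump_smallA h] at h2
  omega

/-- largest position where bump equals the old max value; used for decoding -/
lemma bump_bigB_val : bump t (bigB t h) = t (bigB t h) := by
  rw [bump_apply h, if_neg]
  rintro ⟨-, hlt⟩
  exact absurd hlt (lt_irrefl _)

lemma bump_eq_max_le_bigB {l : Fin n} (hl : bump t l = t (bigB t h)) : l ≤ bigB t h := by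
  rcases le_or_gt l (bigB t h) with hc | hc
  · exact hc
  · exfalso
    have hnotin : ¬ (smallA t h ≤ l ∧ l < bigB t h) := by
      rintro ⟨-, h2⟩; exact absurd (h2.trans hc) (lt_irrefl _)
    rw [bump_apply h, if_neg hnotin] at hl
    have hmem : l ∈ argmaxSet t := by
      rw [argmaxSet, Finset.mem_filter]
      exact ⟨Finset.mem_univ _, fun j => (le_t_bigB h j).trans_eq hl.symm⟩
    exact absurd (Finset.le_max' _ l hmem) (not_le.2 hc)

end ULIS

namespace ULIS

variable {n : ℕ} {t : Fin n → ℕ}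

lemma bump_P1 (h : 2 ≤ (argmaxSet t).card) (ht1 : ∀ i, 1 ≤ t i) : ∀ i, 1 ≤ bump t i := by
  intro i
  rw [bump_apply h]
  split
  · have := ht1 i; omega
  · exact ht1 i

lemma bump_P2 (h : 2 ≤ (argmaxSet t).card) (ht2 : ∀ i j : Fin n, (i : ℕ) + 1 = (j : ℕ) → t i ≤ t j + 1) :
    ∀ i j : Fin n, (i : ℕ) + 1 = (j : ℕ) → bump t i ≤ bump t j + 1 := by
  intro i j hij
  have hijlt : i < j := by rw [Fin.lt_def]; omega
  rw [bump_apply h, bump_apply h]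
  by_cases mi : smallA t h ≤ i ∧ i < bigB t h
  · rw [if_pos mi]
    by_cases mj : smallA t h ≤ j ∧ j < bigB t h
    · rw [if_pos mj]; have := ht2 i j hij; omega
    · have hjb : j = bigB t h := by
        have h1 : smallA t h ≤ j := (mi.1.trans hijlt.le)
        have h2 : (i : ℕ) < (bigB t h : ℕ) := mi.2
        have h3 : (j : ℕ) ≤ (bigB t h : ℕ) := by omega
        rcases eq_or_lt_of_le h3 with he | he
        · exact Fin.ext he
        · exact absurd ⟨h1, he⟩ mj
      rw [if_neg mj]
      have h4 : t i ≤ t (bigB t h) := le_t_bigB h i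
      rw [hjb]
      omega
  · rw [if_neg mi]
    by_cases mj : smallA t h ≤ j ∧ j < bigB t h
    · rw [if_pos mj]; have := ht2 i j hij; omega
    · rw [if_neg mj]; exact ht2 i j hij

lemma bump_P3 (h : 2 ≤ (argmaxSet t).card) (hn : 0 < n) (ht3 : t ⟨n - 1, Nat.sub_lt hn Nat.one_pos⟩ = 1) :
    bump t ⟨n - 1, Nat.sub_lt hn Nat.one_pos⟩ = 1 := by
  rw [bump_apply h, if_neg, ht3]
  rintro ⟨-, hlt⟩
  have h1 : ((bigB t h : Fin n) : ℕ) < n := (bigB t h).isLt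
  have h2 : (n - 1 : ℕ) < (bigB t h : ℕ) := hlt
  omega

lemma bump_inj {t₁ t₂ : Fin n → ℕ} (h₁ : 2 ≤ (argmaxSet t₁).card)
    (h₂ : 2 ≤ (argmaxSet t₂).card) (heq : bump t₁ = bump t₂) : t₁ = t₂ := by
  have ha : smallA t₂ h₂ = smallA t₁ h₁ := by
    refine bump_argmax_unique h₁ (fun l => ?_)
    rw [heq]
    exact bump_argmax h₂ l
  have hM : t₁ (bigB t₁ h₁) = t₂ (bigB t₂ h₂) := by
    have e1 : bump t₁ (smallA t₁ h₁) = t₁ (bigB t₁ h₁) + 1 := bump_smallA h₁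
    have e2 : bump t₂ (smallA t₂ h₂) = t₂ (bigB t₂ h₂) + 1 := bump_smallA h₂
    rw [ha, ← heq] at e2
    omega
  have hb : bigB t₁ h₁ = bigB t₂ h₂ := by
    have e1 : bump t₁ (bigB t₂ h₂) = t₁ (bigB t₁ h₁) := by
      rw [heq, hM]; exact bump_bigB_val h₂
    have e2 : bump t₂ (bigB t₁ h₁) = t₂ (bigB t₂ h₂) := by
      rw [← heq, ← hM]; exact bump_bigB_val h₁
    exact le_antisymm (bump_eq_max_le_bigB h₂ e2) (bump_eq_max_le_bigB h₁ e1)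
  funext i
  have hp := congrFun heq i
  rw [bump_apply h₁, bump_apply h₂, ha, hb] at hp
  split at hp <;> omega

end ULIS


namespace ULIS

variable {n : ℕ} {p : Equiv.Perm (Fin n)}

lemma multimax_of_not_hasULIS (hn : 0 < n) (hav : Avoids132 p) (hnot : ¬ HasULIS p) :
    2 ≤ (argmaxSet (rank p)).card := by
  by_contra hlt
  push_neg at hlt
  obtain ⟨i₀, hi₀⟩ := Finset.card_eq_one.1 (le_antisymm (by omega)
    (Finset.card_pos.2 (argmaxSet_nonempty (rank p) hn)))
  have hmem : i₀ ∈ argmaxSet (rank p) := by rw [hi₀]; exact Finset.mem_singleton_self _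
  rw [argmaxSet, Finset.mem_filter] at hmem
  refine hnot (hasULIS_of_unique_argmax hav i₀ hmem.2 (fun j hj => ?_))
  have : j ∈ argmaxSet (rank p) := by
    rw [argmaxSet, Finset.mem_filter]; exact ⟨Finset.mem_univ _, hj⟩
  rw [hi₀] at this
  exact Finset.mem_singleton.1 this

lemma rank_qperm_bump (hn : 0 < n) (hav : Avoids132 p)
    (h2 : 2 ≤ (argmaxSet (rank p)).card) :
    ∀ i, rank (qperm (bump (rank p))) i = bump (rank p) i :=
  qperm_rank (bump_P1 h2 (fun i => one_le_rank p i))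
    (bump_P2 h2 (fun i j hij => rank_step hav hij))
    (fun hh => bump_P3 h2 hh (rank_last hh))

lemma hasULIS_qperm_bump (hn : 0 < n) (hav : Avoids132 p)
    (h2 : 2 ≤ (argmaxSet (rank p)).card) :
    HasULIS (qperm (bump (rank p))) := by
  have hrk := rank_qperm_bump hn hav h2
  refine hasULIS_of_unique_argmax qperm_avoids (smallA (rank p) h2)
    (fun j => ?_) (fun j hj => ?_)
  · rw [hrk, hrk]; exact bump_argmax h2 j
  · refine bump_argmax_unique h2 (fun l => ?_)
    rw [← hrk, ← hrk]; exact hj l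

end ULIS

/-- There is an injection from 132-avoiding permutations of length `n`
without a ULIS into those with a ULIS; consequently `|U_n(132)| ≥ |V_n(132)|`. -/
theorem exists_injection_V_to_U (n : ℕ) (hn : 0 < n) :
    (∃ g : {p : Equiv.Perm (Fin n) // Avoids132 p ∧ ¬ HasULIS p} →
           {p : Equiv.Perm (Fin n) // Avoids132 p ∧ HasULIS p},
      Function.Injective g) ∧
    Nat.card {p : Equiv.Perm (Fin n) // Avoids132 p ∧ HasULIS p} ≥
      Nat.card {p : Equiv.Perm (Fin n) // Avoids132 p ∧ ¬ HasULIS p} := by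
  have key : ∀ x : {p : Equiv.Perm (Fin n) // Avoids132 p ∧ ¬ HasULIS p},
      2 ≤ (ULIS.argmaxSet (rank x.1)).card :=
    fun x => ULIS.multimax_of_not_hasULIS hn x.2.1 x.2.2
  set g : {p : Equiv.Perm (Fin n) // Avoids132 p ∧ ¬ HasULIS p} →
      {p : Equiv.Perm (Fin n) // Avoids132 p ∧ HasULIS p} :=
    fun x => ⟨ULIS.qperm (ULIS.bump (rank x.1)),
      ULIS.qperm_avoids,
      ULIS.hasULIS_qperm_bump hn x.2.1 (key x)⟩ with hg
  have ginj : Function.Injective g := by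
    intro x₁ x₂ hx
    have hq : ULIS.qperm (ULIS.bump (rank x₁.1)) = ULIS.qperm (ULIS.bump (rank x₂.1)) :=
      congrArg Subtype.val hx
    have hb : ULIS.bump (rank x₁.1) = ULIS.bump (rank x₂.1) := by
      funext i
      rw [← ULIS.rank_qperm_bump hn x₁.2.1 (key x₁) i,
          ← ULIS.rank_qperm_bump hn x₂.2.1 (key x₂) i, hq]
    have ht : rank x₁.1 = rank x₂.1 := ULIS.bump_inj (key x₁) (key x₂) hb
    exact Subtype.ext (ULIS.rank_injective x₁.2.1 x₂.2.1 ht)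
  exact ⟨⟨g, ginj⟩, Nat.card_le_card_of_injective g ginj⟩
end

section
/- For every positive integer n, letting u_n(132) = |U_n(132)| be the number of 132-avoiding permutations of length n with a unique longest increasing subsequence, one has 2·u_n(132) ≥ C_n, where C_n = binomial(2n, n)/(n+1) is the n-th Catalan number; equivalently u_n(132)/C_n ≥ 1/2. -/
/-!
The rank sequence of a 132-avoiding permutation (the length of the longest increasing
subsequence starting at each position) lies in `S n`, and the permutation can be rebuilt from
it: for positions `a < b` the entry at `a` is below the entry at `b` exactly when every rank in
`[a, b)` exceeds the rank at `b`. Binary trees with `n` nodes give Catalan many such sequences.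
The permutation has a unique longest increasing subsequence as soon as the maximal rank is
attained only once, and a sequence whose maximum `M` is repeated is sent injectively to one with
the unique maximum `M + 1`: delete the first `M`, raise the entries up to the second `M` by one
and insert `M + 1` in front of it. With a flag recording whether a sequence was raised, the
trees therefore inject into `U_n(132) × Bool`.
-/

namespace ULIS132

open Finset

section Dominates

variable {f : ℕ → ℕ} {a b c : ℕ}

def Dominates (f : ℕ → ℕ) (i j : ℕ) : Prop := ∀ k ∈ Ico i j, f j < f k

instance (f : ℕ → ℕ) (i j : ℕ) : Decidable (Dominates f i j) :=
  inferInstanceAs (Decidable (∀ k ∈ Ico i j, f j < f k))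

lemma Dominates.lt (h : Dominates f a b) (hab : a < b) : f b < f a :=
  h a (by simpa using hab)

lemma Dominates.mono (h : Dominates f a c) (hab : a ≤ b) : Dominates f b c :=
  fun k hk => h k (by simp only [mem_Ico] at hk ⊢; omega)

lemma Dominates.trans (hab : Dominates f a b) (hbc : Dominates f b c) (hb : b < c) :
    Dominates f a c := by
  intro k hk
  rcases lt_or_ge k b with hkb | hkb
  · exact (hbc.lt hb).trans (hab k (by simp only [mem_Ico] at hk ⊢; omega))
  · exact hbc k (by simp only [mem_Ico] at hk ⊢; omega)

def EntryLT (f : ℕ → ℕ) (a b : ℕ) : Prop :=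
  a < b ∧ Dominates f a b ∨ b < a ∧ ¬ Dominates f b a

instance (f : ℕ → ℕ) (a b : ℕ) : Decidable (EntryLT f a b) := by
  unfold EntryLT; infer_instance

lemma entryLT_irrefl (a : ℕ) : ¬ EntryLT f a a := by
  simp [EntryLT]

lemma entryLT_or_entryLT (h : a ≠ b) : EntryLT f a b ∨ EntryLT f b a := by
  unfold EntryLT
  rcases lt_or_gt_of_ne h with h | h
  · by_cases hd : Dominates f a b <;> tauto
  · by_cases hd : Dominates f b a <;> tauto

lemma entryLT_trans (hab : EntryLT f a b) (hbc : EntryLT f b c) : EntryLT f a c := by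
  unfold EntryLT at *
  rcases hab with ⟨hab, d₁⟩ | ⟨hba, d₁⟩ <;> rcases hbc with ⟨hbc, d₂⟩ | ⟨hcb, d₂⟩
  · exact .inl ⟨hab.trans hbc, d₁.trans d₂ hbc⟩
  · rcases lt_trichotomy a c with hac | rfl | hca
    · exact absurd (d₁.mono hac.le) d₂
    · exact absurd d₁ d₂
    · exact .inr ⟨hca, fun d => d₂ (d.trans d₁ hab)⟩
  · rcases lt_trichotomy a c with hac | rfl | hca
    · exact .inl ⟨hac, d₂.mono hba.le⟩
    · exact absurd d₂ d₁
    · exact .inr ⟨hca, fun d => d₁ (d₂.trans d hca)⟩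
  · exact .inr ⟨hcb.trans hba, fun d => d₁ (d.mono hcb.le)⟩

end Dominates

section PermOf

variable {n : ℕ} {f : ℕ → ℕ}

def numBelow (f : ℕ → ℕ) (a : Fin n) : ℕ := #{b : Fin n | EntryLT f b a}

lemma numBelow_lt_numBelow {a b : Fin n} (h : EntryLT f a b) : numBelow f a < numBelow f b := by
  refine card_lt_card ⟨fun c hc => ?_, fun hsub => ?_⟩
  · simp only [mem_filter, mem_univ, true_and] at hc ⊢
    exact entryLT_trans hc h
  · exact entryLT_irrefl a (mem_filter.1 (hsub (mem_filter.2 ⟨mem_univ a, h⟩))).2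

lemma numBelow_lt (a : Fin n) : numBelow f a < n := by
  calc numBelow f a < #(univ : Finset (Fin n)) :=
        card_lt_card (filter_ssubset.2 ⟨a, mem_univ a, entryLT_irrefl _⟩)
    _ = n := card_fin n

lemma numBelow_injective :
    Function.Injective (fun a : Fin n => (⟨numBelow f a, numBelow_lt a⟩ : Fin n)) := by
  intro a b hab
  by_contra hne
  have hab : numBelow f a = numBelow f b := congrArg Fin.val hab
  rcases entryLT_or_entryLT (f := f) (Fin.val_ne_of_ne hne) with h | h
  · exact (numBelow_lt_numBelow h).ne hab
  · exact (numBelow_lt_numBelow h).ne' hab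

noncomputable def permOf (n : ℕ) (f : ℕ → ℕ) : Equiv.Perm (Fin n) :=
  Equiv.ofBijective _ (Finite.injective_iff_bijective.1 (numBelow_injective (f := f)))

lemma permOf_lt_permOf_iff {a b : Fin n} : permOf n f a < permOf n f b ↔ EntryLT f a b := by
  refine ⟨fun h => ?_, numBelow_lt_numBelow⟩
  rcases entryLT_or_entryLT (f := f) (Fin.val_ne_of_ne (ne_of_apply_ne _ h.ne)) with h' | h'
  · exact h'
  · exact absurd h (lt_asymm (numBelow_lt_numBelow h'))

lemma permOf_lt_permOf_iff_of_lt {a b : Fin n} (hab : a < b) :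
    permOf n f a < permOf n f b ↔ Dominates f a b := by
  rw [permOf_lt_permOf_iff, EntryLT]
  have : ¬ (b : ℕ) < a := by omega
  simp [hab, this]

theorem avoids132_permOf : Avoids132 (permOf n f) := by
  rintro ⟨i, j, k, hij, hjk, hik, hkj⟩
  rw [permOf_lt_permOf_iff_of_lt (hij.trans hjk)] at hik
  rw [← not_le, le_iff_lt_or_eq, permOf_lt_permOf_iff_of_lt hjk] at hkj
  exact hkj (.inl (hik.mono hij.le))

end PermOf

section InjOnIcc

variable {α : Type*} {s : Finset α} {g : α → ℕ} {m : ℕ}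

lemma card_le_of_injOn_Icc (hinj : Set.InjOn g s) (hg : ∀ b ∈ s, g b ∈ Icc 1 m) : #s ≤ m :=
  calc #s = #(s.image g) := (card_image_of_injOn hinj).symm
    _ ≤ #(Icc 1 m) := card_le_card (image_subset_iff.2 hg)
    _ = m := by simp

lemma image_eq_Icc_of_injOn (hinj : Set.InjOn g s) (hg : ∀ b ∈ s, g b ∈ Icc 1 m)
    (hm : m ≤ #s) : s.image g = Icc 1 m :=
  eq_of_subset_of_card_le (image_subset_iff.2 hg) (by simpa [card_image_of_injOn hinj] using hm)

end InjOnIcc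

section ULIS

variable {n : ℕ} {f : ℕ → ℕ}

lemma incSubseq_permOf_iff {s : Finset (Fin n)} :
    IncSubseq (permOf n f) s ↔ ∀ a ∈ s, ∀ b ∈ s, a < b → Dominates f a b :=
  forall₂_congr fun _ _ => forall₂_congr fun _ _ => forall_congr' fun hab =>
    permOf_lt_permOf_iff_of_lt hab

lemma strictAntiOn_of_incSubseq {s : Finset (Fin n)} (hs : IncSubseq (permOf n f) s) :
    StrictAntiOn (fun b : Fin n => f b) s :=
  fun a ha b hb hab => (incSubseq_permOf_iff.1 hs a ha b hb hab).lt hab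

/-- As `f` descends by steps of at most one down to `f (n - 1) = 1`, the first position
`j ≥ i` with `f j ≤ v` has `f j = v`. -/
lemma exists_dominates_eq (hf : InSn n (fun i => f i)) (i : Fin n) {v : ℕ} (hv : v ∈ Icc 1 (f i)) :
    ∃ j : Fin n, i ≤ j ∧ Dominates f i j ∧ f j = v := by
  rw [mem_Icc] at hv
  have hi := i.isLt
  have hex : ∃ k, (i : ℕ) ≤ k ∧ k < n ∧ f k ≤ v :=
    ⟨n - 1, by omega, by omega, by simpa using (hf.2.2 (by omega)).trans_le hv.1⟩
  obtain ⟨hik, hkn, hkv⟩ := Nat.find_spec hex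
  have hmin : ∀ k, (i : ℕ) ≤ k → k < Nat.find hex → v < f k := fun k hik hk =>
    lt_of_not_ge fun hle => Nat.find_min hex hk ⟨hik, by omega, hle⟩
  refine ⟨⟨Nat.find hex, hkn⟩, hik, fun k hk => ?_, ?_⟩
  · simp only [mem_Ico] at hk
    exact hkv.trans_lt (hmin k hk.1 hk.2)
  · show f (Nat.find hex) = v
    rcases eq_or_lt_of_le hik with h | h
    · rw [← h] at hkv ⊢; omega
    · have hstep := hf.2.1 (Nat.find hex - 1) (by omega)
      simp only [Nat.sub_add_cancel (show 1 ≤ Nat.find hex by omega)] at hstep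
      have := hmin (Nat.find hex - 1) (by omega) (by omega)
      omega

lemma card_filter_dominates (hf : InSn n (fun i => f i)) (i : Fin n) :
    #{b : Fin n | i ≤ b ∧ Dominates f i b} = f i := by
  set S : Finset (Fin n) := {b | i ≤ b ∧ Dominates f i b}
  have hanti : StrictAntiOn (fun b : Fin n => f b) S := fun a ha b hb hab => by
    simp only [S, coe_filter, mem_univ, true_and, Set.mem_ofPred_eq] at ha hb
    exact (hb.2.mono ha.1).lt hab
  have hrange : ∀ b ∈ S, f b ∈ Icc 1 (f i) := fun b hb => by
    simp only [S, mem_filter, mem_univ, true_and] at hb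
    refine mem_Icc.2 ⟨hf.1 b, ?_⟩
    rcases eq_or_lt_of_le hb.1 with h | h
    · exact h ▸ le_rfl
    · exact (hb.2.lt h).le
  have himage : S.image (fun b : Fin n => f b) = Icc 1 (f i) := by
    refine Subset.antisymm (fun v hv => ?_) (fun v hv => ?_)
    · obtain ⟨b, hb, rfl⟩ := mem_image.1 hv; exact hrange b hb
    · obtain ⟨j, hij, hd, rfl⟩ := exists_dominates_eq hf i hv
      exact mem_image_of_mem _ (by simp [S, hij, hd])
  rw [← card_image_of_injOn hanti.injOn, himage, Nat.card_Icc, Nat.add_sub_cancel]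

/-- The longest increasing subsequences of `permOf n f` have length `max f`; when the maximum is
attained only at `j`, any of them contains `j` and is therefore `{b | j ≤ b ∧ Dominates f j b}`. -/
theorem hasULIS_permOf (hf : InSn n (fun i => f i)) (j : Fin n)
    (hj : ∀ k : Fin n, k ≠ j → f k < f j) : HasULIS (permOf n f) := by
  set S : Finset (Fin n) := {b | j ≤ b ∧ Dominates f j b}
  have hS : IncSubseq (permOf n f) S := incSubseq_permOf_iff.2 fun a ha b hb _ => by
    simp only [S, mem_filter, mem_univ, true_and] at ha hb
    exact hb.2.mono ha.1
  have hcard : #S = f j := card_filter_dominates hf j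
  have hrange : ∀ b : Fin n, f b ∈ Icc 1 (f j) := fun b => by
    refine mem_Icc.2 ⟨hf.1 b, ?_⟩
    rcases eq_or_ne b j with rfl | h
    · exact le_rfl
    · exact (hj b h).le
  have hlong : ∀ t, IncSubseq (permOf n f) t → #t ≤ #S := fun t ht =>
    hcard ▸ card_le_of_injOn_Icc (strictAntiOn_of_incSubseq ht).injOn fun b _ => hrange b
  refine ⟨S, ⟨hS, hlong⟩, fun t ⟨ht, htmax⟩ => ?_⟩
  have hjt : j ∈ t := by
    have himage := image_eq_Icc_of_injOn (strictAntiOn_of_incSubseq ht).injOn (fun b _ => hrange b)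
      (hcard ▸ htmax S hS)
    obtain ⟨b, hb, hbj⟩ := mem_image.1 (himage ▸ mem_Icc.2 ⟨hf.1 j, le_rfl⟩)
    obtain rfl : b = j := by_contra fun h => (hj b h).ne hbj
    exact hb
  have hsub : t ⊆ S := fun b hb => by
    simp only [S, mem_filter, mem_univ, true_and]
    rcases lt_trichotomy b j with h | rfl | h
    · exact absurd ((incSubseq_permOf_iff.1 ht b hb j hjt h).lt h) (lt_asymm (hj b h.ne))
    · exact ⟨le_rfl, fun k hk => by simp at hk⟩
    · exact ⟨h.le, incSubseq_permOf_iff.1 ht j hjt b hb h⟩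
  exact eq_of_subset_of_card_le hsub (htmax S hS)

lemma card_filter_permOf_le (hf : InSn n (fun i => f i)) (i : Fin n) :
    #{b : Fin n | i ≤ b ∧ permOf n f i ≤ permOf n f b} = f i := by
  rw [← card_filter_dominates hf i]
  congr 1
  ext b
  simp only [mem_filter, mem_univ, true_and, and_congr_right_iff]
  intro hib
  rcases eq_or_lt_of_le hib with rfl | h
  · simp [Dominates]
  · rw [le_iff_lt_or_eq, permOf_lt_permOf_iff_of_lt h, (permOf n f).injective.eq_iff]
    simp [h.ne]

lemma eq_of_permOf_eq {g : ℕ → ℕ} (hf : InSn n (fun i => f i)) (hg : InSn n (fun i => g i))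
    (h : permOf n f = permOf n g) (i : Fin n) : f i = g i := by
  rw [← card_filter_permOf_le hf, ← card_filter_permOf_le hg, h]

end ULIS

structure InSList (L : List ℕ) : Prop where
  ne_nil : L ≠ []
  pos : ∀ x ∈ L, 1 ≤ x
  chain : L.IsChain (fun a b => a ≤ b + 1)
  getLast? : L.getLast? = some 1

lemma InSList.inSn {L : List ℕ} (hL : InSList L) {n : ℕ} (hn : L.length = n) :
    InSn n (fun i => L.getD i 0) := by
  subst hn
  refine ⟨fun i => ?_, fun i hi => ?_, fun _ => ?_⟩
  · simpa [List.getD_eq_getElem] using hL.pos _ (List.getElem_mem i.isLt)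
  · show L.getD i 0 ≤ L.getD (i + 1) 0 + 1
    rw [List.getD_eq_getElem _ _ (by omega), List.getD_eq_getElem _ _ hi]
    exact List.isChain_iff_getElem.1 hL.chain i hi
  · have h := hL.getLast?
    rw [List.getLast?_eq_getElem?] at h
    simp [List.getD_eq_getElem?_getD, h]

lemma exists_getD_lt_of_count_eq_one {L : List ℕ} {M : ℕ} (hle : ∀ x ∈ L, x ≤ M)
    (hM : L.count M = 1) {n : ℕ} (hn : L.length = n) :
    ∃ j : Fin n, ∀ k : Fin n, k ≠ j → L.getD k 0 < L.getD j 0 := by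
  subst hn
  obtain ⟨j, hj, hjM⟩ := List.getElem_of_mem (List.count_pos_iff.1 (by omega : 0 < L.count M))
  refine ⟨⟨j, hj⟩, fun k hk => ?_⟩
  simp only [List.getD_eq_getElem _ _ k.isLt, List.getD_eq_getElem _ _ hj, hjM]
  refine lt_of_le_of_ne (hle _ (List.getElem_mem _)) fun hkM => ?_
  have hdup : L.Duplicate M := List.duplicate_iff_exists_distinct_get.2 <| by
    rcases lt_or_gt_of_ne (Fin.val_ne_of_ne hk) with h | h
    · exact ⟨k, ⟨j, hj⟩, h, hkM.symm, hjM.symm⟩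
    · exact ⟨⟨j, hj⟩, k, h, hjM.symm, hkM.symm⟩
  have := List.duplicate_iff_two_le_count.1 hdup
  omega

/-- `node l r` stands for the 132-avoiding permutation `α n β` with `α` (built from `l`) lying
above `β` (built from `r`); this is its rank sequence, as the ranks in `α` gain one through `n`,
whose rank is `1`. -/
def treeSeq : BinaryTree Unit → List ℕ
  | .nil => []
  | .node _ l r => (treeSeq l).map (· + 1) ++ 1 :: treeSeq r

lemma length_treeSeq (τ : BinaryTree Unit) : (treeSeq τ).length = τ.numNodes := by
  induction τ with
  | nil => rfl
  | node _ l r ihl ihr => simp [treeSeq, BinaryTree.numNodes, ihl, ihr]; omega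

lemma pos_of_mem_treeSeq {τ : BinaryTree Unit} {x : ℕ} (hx : x ∈ treeSeq τ) : 1 ≤ x := by
  induction τ with
  | nil => simp [treeSeq] at hx
  | node _ l r ihl ihr =>
    simp only [treeSeq, List.mem_append, List.mem_cons, List.mem_map] at hx
    rcases hx with ⟨y, _, rfl⟩ | rfl | h
    · omega
    · exact le_rfl
    · exact ihr h

lemma eq_one_of_mem_getLast?_treeSeq (τ : BinaryTree Unit) : ∀ x ∈ (treeSeq τ).getLast?, x = 1 := by
  induction τ with
  | nil => simp [treeSeq]
  | node _ l r ihl ihr =>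
    intro x hx
    simp only [treeSeq, List.getLast?_append, List.getLast?_cons, Option.mem_def] at hx
    cases h : (treeSeq r).getLast? <;> simp_all

lemma inSList_treeSeq {τ : BinaryTree Unit} (h : τ ≠ .nil) : InSList (treeSeq τ) := by
  have hne : treeSeq τ ≠ [] := by
    cases τ
    · exact absurd rfl h
    · simp [treeSeq]
  refine ⟨hne, fun x => pos_of_mem_treeSeq, ?_, ?_⟩
  · clear h hne
    induction τ with
    | nil => simp [treeSeq]
    | node _ l r ihl ihr =>
      simp only [treeSeq, List.isChain_append, List.isChain_map, List.isChain_cons]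
      refine ⟨ihl.imp fun _ _ h => by omega, ⟨fun _ _ => by omega, ihr⟩, fun x hx y hy => ?_⟩
      rw [List.getLast?_map] at hx
      obtain ⟨z, hz, rfl⟩ := Option.mem_map.1 hx
      simp only [List.head?_cons, Option.mem_def, Option.some.injEq] at hy
      have := eq_one_of_mem_getLast?_treeSeq l z hz
      omega
  · obtain ⟨x, hx⟩ := Option.isSome_iff_exists.1 (List.getLast?_isSome.2 hne)
    rw [hx, eq_one_of_mem_getLast?_treeSeq τ x hx]

theorem treeSeq_injective : Function.Injective treeSeq := by
  intro τ₁
  induction τ₁ with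
  | nil => rintro (_ | _) h <;> simp_all [treeSeq]
  | node _ l r ihl ihr =>
    rintro (_ | ⟨_, l', r'⟩) h
    · simp [treeSeq] at h
    have hone : ∀ τ : BinaryTree Unit, 1 ∉ (treeSeq τ).map (· + 1) := fun τ => by
      simpa using fun h => absurd (pos_of_mem_treeSeq h) (by omega)
    have hlen := congrArg (List.idxOf 1) h
    simp only [treeSeq, List.idxOf_append_of_notMem (hone _), List.idxOf_cons_self] at hlen
    simp only [treeSeq] at h
    obtain ⟨hl, hr⟩ := List.append_inj h (by simpa using hlen)
    rw [ihl (List.map_injective_iff.2 (add_left_injective 1) hl), ihr (List.cons_injective hr)]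

section RaiseAt

variable {M : ℕ}

def bumpBefore (M : ℕ) : List ℕ → List ℕ
  | [] => []
  | a :: s => (a + 1) :: if a = M then a :: s else bumpBefore M s

/-- For `L = a ++ M :: b ++ M :: c` with `M ∉ a ++ b`, this is
`a ++ b.map (· + 1) ++ (M + 1) :: M :: c`. -/
def raiseAt (M : ℕ) : List ℕ → List ℕ
  | [] => []
  | a :: s => if a = M then bumpBefore M s else a :: raiseAt M s

lemma length_bumpBefore {s : List ℕ} (h : M ∈ s) : (bumpBefore M s).length = s.length + 1 := by
  induction s with
  | nil => simp at h
  | cons a t ih =>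
    by_cases ha : a = M
    · simp [bumpBefore, ha]
    · simp [bumpBefore, ha, ih (by simpa [Ne.symm ha] using h)]

lemma head?_bumpBefore (s : List ℕ) : (bumpBefore M s).head? = s.head?.map (· + 1) := by
  cases s <;> rfl

lemma mem_bumpBefore {s : List ℕ} {x : ℕ} (hx : x ∈ bumpBefore M s) :
    ∃ y ∈ s, y ≤ x ∧ x ≤ y + 1 := by
  induction s with
  | nil => simp [bumpBefore] at hx
  | cons a t ih =>
    simp only [bumpBefore, List.mem_cons] at hx
    split_ifs at hx with ha
    · rcases hx with rfl | hx
      · exact ⟨a, by simp, by omega, le_rfl⟩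
      · exact ⟨x, hx, le_rfl, by omega⟩
    · rcases hx with rfl | hx
      · exact ⟨a, by simp, by omega, le_rfl⟩
      · obtain ⟨y, hy, h⟩ := ih hx
        exact ⟨y, by simp [hy], h⟩

lemma count_bumpBefore {s : List ℕ} (hle : ∀ x ∈ s, x ≤ M) (h : M ∈ s) :
    (bumpBefore M s).count (M + 1) = 1 := by
  induction s with
  | nil => simp at h
  | cons a t ih =>
    by_cases ha : a = M
    · subst ha
      simp only [bumpBefore, if_true, List.count_cons_self, Nat.add_eq_right]
      exact List.count_eq_zero.2 fun hmem => by have := hle _ hmem; omega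
    · simp only [bumpBefore, if_neg ha]
      rw [List.count_cons_of_ne (by omega)]
      exact ih (fun x hx => hle x (by simp [hx])) (by simpa [Ne.symm ha] using h)

lemma isChain_bumpBefore {s : List ℕ} (hc : s.IsChain (fun a b => a ≤ b + 1)) (h : M ∈ s) :
    (bumpBefore M s).IsChain (fun a b => a ≤ b + 1) := by
  induction s with
  | nil => simp at h
  | cons a t ih =>
    by_cases ha : a = M
    · simpa [bumpBefore, ha] using hc
    · simp only [bumpBefore, if_neg ha, List.isChain_cons, head?_bumpBefore, Option.mem_map]
      rw [List.isChain_cons] at hc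
      refine ⟨?_, ih hc.2 (by simpa [Ne.symm ha] using h)⟩
      rintro _ ⟨y, hy, rfl⟩
      have := hc.1 y hy
      omega

lemma getLast?_bumpBefore {s : List ℕ} (h : M ∈ s) : (bumpBefore M s).getLast? = s.getLast? := by
  induction s with
  | nil => simp at h
  | cons a t ih =>
    by_cases ha : a = M
    · simp [bumpBefore, ha]
    · have hM : M ∈ t := by simpa [Ne.symm ha] using h
      obtain ⟨b, t', rfl⟩ := List.exists_cons_of_ne_nil (List.ne_nil_of_mem hM)
      simp only [bumpBefore, if_neg ha] at ih ⊢
      rw [List.getLast?_cons_cons, ih hM, List.getLast?_cons_cons]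

lemma bumpBefore_injective : Function.Injective (bumpBefore M) := by
  intro s₁
  induction s₁ with
  | nil => rintro (_ | _) h <;> simp_all [bumpBefore]
  | cons a t ih =>
    rintro (_ | ⟨a', t'⟩) h
    · simp [bumpBefore] at h
    simp only [bumpBefore, List.cons.injEq, Nat.add_right_cancel_iff] at h
    obtain ⟨rfl, h⟩ := h
    split_ifs at h with ha
    · exact h
    · rw [ih h]

lemma bumpBefore_ne_cons {t u : List ℕ} {a : ℕ} (hc : (M :: t).IsChain (fun a b => a ≤ b + 1))
    (ha : a < M) : bumpBefore M t ≠ a :: u := by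
  intro h
  have hhead := congrArg List.head? h
  rw [head?_bumpBefore] at hhead
  obtain ⟨b, hb, hba⟩ := Option.map_eq_some_iff.1 hhead
  have := (List.isChain_cons.1 hc).1 b hb
  omega

lemma length_raiseAt {L : List ℕ} (h : 2 ≤ L.count M) : (raiseAt M L).length = L.length := by
  induction L with
  | nil => simp at h
  | cons a t ih =>
    by_cases ha : a = M
    · subst ha
      simp [raiseAt, length_bumpBefore (List.count_pos_iff.1 (by simpa using h))]
    · simp [raiseAt, ha, ih (by simpa [ha] using h)]

lemma mem_raiseAt {L : List ℕ} {x : ℕ} (hx : x ∈ raiseAt M L) : ∃ y ∈ L, y ≤ x ∧ x ≤ y + 1 := by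
  induction L with
  | nil => simp [raiseAt] at hx
  | cons a t ih =>
    simp only [raiseAt] at hx
    split_ifs at hx with ha
    · obtain ⟨y, hy, h⟩ := mem_bumpBefore hx
      exact ⟨y, by simp [hy], h⟩
    · rcases List.mem_cons.1 hx with rfl | hx
      · exact ⟨x, by simp, le_rfl, by omega⟩
      · obtain ⟨y, hy, h⟩ := ih hx
        exact ⟨y, by simp [hy], h⟩

lemma count_raiseAt {L : List ℕ} (hle : ∀ x ∈ L, x ≤ M) (h : 2 ≤ L.count M) :
    (raiseAt M L).count (M + 1) = 1 := by
  induction L with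
  | nil => simp at h
  | cons a t ih =>
    have hle' : ∀ x ∈ t, x ≤ M := fun x hx => hle x (by simp [hx])
    by_cases ha : a = M
    · subst ha
      simpa [raiseAt] using count_bumpBefore hle' (List.count_pos_iff.1 (by simpa using h))
    · have : a ≠ M + 1 := by have := hle a (by simp); omega
      simpa [raiseAt, ha, this] using ih hle' (by simpa [ha] using h)

lemma head?_raiseAt {L : List ℕ} (hc : L.IsChain (fun a b => a ≤ b + 1)) :
    ∀ y ∈ (raiseAt M L).head?, ∃ b ∈ L.head?, b ≤ y := by
  rcases L with _ | ⟨a, t⟩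
  · simp [raiseAt]
  · by_cases ha : a = M
    · subst ha
      simp only [raiseAt, if_true, head?_bumpBefore, Option.mem_map]
      rintro _ ⟨b, hb, rfl⟩
      exact ⟨a, rfl, (List.isChain_cons.1 hc).1 b hb⟩
    · simp [raiseAt, ha]

lemma isChain_raiseAt {L : List ℕ} (hc : L.IsChain (fun a b => a ≤ b + 1)) (h : 2 ≤ L.count M) :
    (raiseAt M L).IsChain (fun a b => a ≤ b + 1) := by
  induction L with
  | nil => simp [raiseAt]
  | cons a t ih =>
    rw [List.isChain_cons] at hc
    by_cases ha : a = M
    · subst ha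
      simpa [raiseAt] using isChain_bumpBefore hc.2 (List.count_pos_iff.1 (by simpa using h))
    · simp only [raiseAt, if_neg ha, List.isChain_cons]
      refine ⟨fun y hy => ?_, ih hc.2 (by simpa [ha] using h)⟩
      obtain ⟨b, hb, hby⟩ := head?_raiseAt hc.2 y hy
      have := hc.1 b hb
      omega

lemma getLast?_raiseAt {L : List ℕ} (h : 2 ≤ L.count M) :
    (raiseAt M L).getLast? = L.getLast? := by
  induction L with
  | nil => simp at h
  | cons a t ih =>
    by_cases ha : a = M
    · subst ha
      have hM : a ∈ t := List.count_pos_iff.1 (by simpa using h)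
      obtain ⟨b, t', rfl⟩ := List.exists_cons_of_ne_nil (List.ne_nil_of_mem hM)
      simp [raiseAt, getLast?_bumpBefore hM]
    · simp [raiseAt, ha, List.getLast?_cons, ih (by simpa [ha] using h)]

lemma eq_of_raiseAt_eq {L₁ L₂ : List ℕ} (hle₁ : ∀ x ∈ L₁, x ≤ M) (hle₂ : ∀ x ∈ L₂, x ≤ M)
    (hc₁ : L₁.IsChain (fun a b => a ≤ b + 1)) (hc₂ : L₂.IsChain (fun a b => a ≤ b + 1))
    (h₁ : 2 ≤ L₁.count M) (h₂ : 2 ≤ L₂.count M) (h : raiseAt M L₁ = raiseAt M L₂) : L₁ = L₂ := by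
  induction L₁ generalizing L₂ with
  | nil => simp at h₁
  | cons a t ih =>
    rcases L₂ with _ | ⟨a', t'⟩
    · simp at h₂
    have ha := hle₁ a (by simp)
    have ha' := hle₂ a' (by simp)
    by_cases haM : a = M <;> by_cases haM' : a' = M <;>
      simp only [raiseAt, haM, haM', if_true, if_false] at h
    · subst haM haM'
      rw [bumpBefore_injective h]
    · exact absurd h (bumpBefore_ne_cons (haM ▸ hc₁) (by omega))
    · exact absurd h.symm (bumpBefore_ne_cons (haM' ▸ hc₂) (by omega))
    · obtain ⟨rfl, htail⟩ := List.cons.inj h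
      rw [ih (L₂ := t') (fun x hx => hle₁ x (by simp [hx])) (fun x hx => hle₂ x (by simp [hx]))
        hc₁.tail hc₂.tail (by simpa [haM] using h₁) (by simpa [haM'] using h₂) htail]

end RaiseAt

def maxL (L : List ℕ) : ℕ := L.foldr max 0

lemma le_maxL {L : List ℕ} {x : ℕ} (hx : x ∈ L) : x ≤ maxL L :=
  List.le_max_of_le hx le_rfl

lemma maxL_mem {L : List ℕ} (h : L ≠ []) : maxL L ∈ L :=
  List.maximum_mem (List.foldr_max_of_ne_nil h).symm

lemma maxL_eq {L : List ℕ} {M : ℕ} (hle : ∀ x ∈ L, x ≤ M) (hM : M ∈ L) : maxL L = M :=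
  le_antisymm (List.max_le_of_forall_le L M hle) (le_maxL hM)

section Raise

variable {L L₁ L₂ : List ℕ}

def raise (L : List ℕ) : List ℕ := raiseAt (maxL L) L

lemma inSList_raise (hL : InSList L) (h : 2 ≤ L.count (maxL L)) : InSList (raise L) := by
  refine ⟨?_, fun x hx => ?_, isChain_raiseAt hL.chain h, (getLast?_raiseAt h).trans hL.getLast?⟩
  · rw [← List.length_pos_iff, raise, length_raiseAt h, List.length_pos_iff]
    exact hL.ne_nil
  · obtain ⟨y, hy, hyx, -⟩ := mem_raiseAt hx
    exact (hL.pos y hy).trans hyx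

lemma le_of_mem_raise {x : ℕ} (hx : x ∈ raise L) : x ≤ maxL L + 1 := by
  obtain ⟨y, hy, -, hxy⟩ := mem_raiseAt hx
  have := le_maxL hy
  omega

lemma maxL_raise (h : 2 ≤ L.count (maxL L)) : maxL (raise L) = maxL L + 1 :=
  maxL_eq (fun _ => le_of_mem_raise)
    (List.count_pos_iff.1 (by rw [raise, count_raiseAt (fun _ => le_maxL) h]; omega))

lemma eq_of_raise_eq (hL₁ : InSList L₁) (hL₂ : InSList L₂) (h₁ : 2 ≤ L₁.count (maxL L₁))
    (h₂ : 2 ≤ L₂.count (maxL L₂)) (h : raise L₁ = raise L₂) : L₁ = L₂ := by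
  have hM : maxL L₁ = maxL L₂ := by
    have := congrArg maxL h
    rw [maxL_raise h₁, maxL_raise h₂] at this
    omega
  rw [raise, raise, ← hM] at h
  exact eq_of_raiseAt_eq (fun _ => le_maxL) (fun _ hx => hM ▸ le_maxL hx) hL₁.chain hL₂.chain h₁
    (hM ▸ h₂) h

end Raise

section UniqueMax

variable {n : ℕ} {L L₁ L₂ : List ℕ}

def HasUniqueMax (L : List ℕ) : Prop := L.count (maxL L) = 1

instance : DecidablePred HasUniqueMax := fun _ => inferInstanceAs (Decidable (_ = _))

lemma two_le_count_maxL (hL : InSList L) (h : ¬ HasUniqueMax L) : 2 ≤ L.count (maxL L) := by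
  have := List.count_pos_iff.2 (maxL_mem hL.ne_nil)
  unfold HasUniqueMax at h
  omega

lemma hasUniqueMax_raise (hL : InSList L) (h : ¬ HasUniqueMax L) : HasUniqueMax (raise L) := by
  have h2 := two_le_count_maxL hL h
  rw [HasUniqueMax, maxL_raise h2, raise, count_raiseAt (fun _ => le_maxL) h2]

theorem avoids132_hasULIS_permOf (hL : InSList L) (hn : L.length = n) (hM : HasUniqueMax L) :
    Avoids132 (permOf n (L.getD · 0)) ∧ HasULIS (permOf n (L.getD · 0)) := by
  obtain ⟨j, hj⟩ := exists_getD_lt_of_count_eq_one (fun _ => le_maxL) hM hn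
  exact ⟨avoids132_permOf, hasULIS_permOf (hL.inSn hn) j hj⟩

lemma eq_of_permOf_getD_eq (hL₁ : InSList L₁) (hL₂ : InSList L₂) (hn₁ : L₁.length = n)
    (hn₂ : L₂.length = n) (h : permOf n (L₁.getD · 0) = permOf n (L₂.getD · 0)) : L₁ = L₂ :=
  List.ext_getElem (hn₁.trans hn₂.symm) fun i h₁ h₂ => by
    simpa [List.getD_eq_getElem, h₁, h₂] using
      eq_of_permOf_eq (hL₁.inSn hn₁) (hL₂.inSn hn₂) h ⟨i, hn₁ ▸ h₁⟩

def uniqueMaxSeq (L : List ℕ) : List ℕ := if HasUniqueMax L then L else raise L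

lemma inSList_uniqueMaxSeq (hL : InSList L) : InSList (uniqueMaxSeq L) := by
  unfold uniqueMaxSeq
  split_ifs with h
  · exact hL
  · exact inSList_raise hL (two_le_count_maxL hL h)

lemma length_uniqueMaxSeq (hL : InSList L) : (uniqueMaxSeq L).length = L.length := by
  unfold uniqueMaxSeq
  split_ifs with h
  · rfl
  · exact length_raiseAt (two_le_count_maxL hL h)

lemma hasUniqueMax_uniqueMaxSeq (hL : InSList L) : HasUniqueMax (uniqueMaxSeq L) := by
  unfold uniqueMaxSeq
  split_ifs with h
  · exact h
  · exact hasUniqueMax_raise hL h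

noncomputable def toULIS (n : ℕ) (L : {L : List ℕ // InSList L ∧ L.length = n}) :
    {p : Equiv.Perm (Fin n) // Avoids132 p ∧ HasULIS p} × Bool :=
  (⟨permOf n ((uniqueMaxSeq L.1).getD · 0), avoids132_hasULIS_permOf
    (inSList_uniqueMaxSeq L.2.1) ((length_uniqueMaxSeq L.2.1).trans L.2.2)
    (hasUniqueMax_uniqueMaxSeq L.2.1)⟩, decide (HasUniqueMax L.1))

lemma toULIS_injective (n : ℕ) : Function.Injective (toULIS n) := by
  rintro ⟨L₁, hL₁, hn₁⟩ ⟨L₂, hL₂, hn₂⟩ h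
  simp only [toULIS, Prod.mk.injEq, Subtype.mk.injEq, decide_eq_decide] at h
  obtain ⟨hperm, hflag⟩ := h
  have hseq := eq_of_permOf_getD_eq (inSList_uniqueMaxSeq hL₁) (inSList_uniqueMaxSeq hL₂)
    ((length_uniqueMaxSeq hL₁).trans hn₁) ((length_uniqueMaxSeq hL₂).trans hn₂) hperm
  refine Subtype.ext ?_
  unfold uniqueMaxSeq at hseq
  by_cases h₁ : HasUniqueMax L₁
  · simpa [h₁, hflag.1 h₁] using hseq
  · have h₂ : ¬ HasUniqueMax L₂ := fun h₂ => h₁ (hflag.2 h₂)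
    simp only [h₁, h₂, if_false] at hseq
    exact eq_of_raise_eq hL₁ hL₂ (two_le_count_maxL hL₁ h₁) (two_le_count_maxL hL₂ h₂) hseq

end UniqueMax

lemma ne_nil_of_mem_treesOfNumNodesEq {n : ℕ} (hn : 0 < n) {τ : BinaryTree Unit}
    (hτ : τ ∈ BinaryTree.treesOfNumNodesEq n) : τ ≠ .nil := by
  rintro rfl
  simp only [BinaryTree.mem_treesOfNumNodesEq, BinaryTree.numNodes] at hτ
  omega

theorem catalan_le_two_mul_card {n : ℕ} (hn : 0 < n) :
    catalan n ≤ 2 * Nat.card {p : Equiv.Perm (Fin n) // Avoids132 p ∧ HasULIS p} := by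
  let seq (τ : {τ // τ ∈ BinaryTree.treesOfNumNodesEq n}) :
      {L : List ℕ // InSList L ∧ L.length = n} :=
    ⟨treeSeq τ, inSList_treeSeq (ne_nil_of_mem_treesOfNumNodesEq hn τ.2),
      (length_treeSeq τ).trans (BinaryTree.mem_treesOfNumNodesEq.1 τ.2)⟩
  have hseq : Function.Injective seq := fun τ₁ τ₂ h =>
    Subtype.ext (treeSeq_injective (congrArg Subtype.val h))
  calc catalan n = Nat.card {τ // τ ∈ BinaryTree.treesOfNumNodesEq n} := by
        rw [Nat.card_eq_finsetCard, BinaryTree.treesOfNumNodesEq_card_eq_catalan]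
    _ ≤ Nat.card ({p : Equiv.Perm (Fin n) // Avoids132 p ∧ HasULIS p} × Bool) :=
        Nat.card_le_card_of_injective _ ((toULIS_injective n).comp hseq)
    _ = 2 * Nat.card {p : Equiv.Perm (Fin n) // Avoids132 p ∧ HasULIS p} := by
        rw [Nat.card_prod, Nat.card_eq_fintype_card (α := Bool), Fintype.card_bool, mul_comm]

end ULIS132

/-- Twice the number of 132-avoiding permutations of length `n` with
a unique longest increasing subsequence is at least the `n`-th Catalan number
`C_n = binomial(2n, n) / (n + 1)`; i.e. `u_n(132) / C_n ≥ 1/2`. -/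
theorem two_mul_u_ge_catalan (n : ℕ) (hn : 0 < n) :
    2 * Nat.card {p : Equiv.Perm (Fin n) // Avoids132 p ∧ HasULIS p} ≥
      Nat.choose (2 * n) n / (n + 1) := by
  rw [ge_iff_le, ← Nat.centralBinom_eq_two_mul_choose, ← catalan_eq_centralBinom_div]
  exact ULIS132.catalan_le_two_mul_card hn
end
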